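/- arXiv:1901.07063 — 8 statements merged into one kernel-verified Lean document; each statement's English description precedes it below -/
import Mathlib

section
/- Let p ∈ (0,1/2), p̄ = 1−p, and let L(λ₁,λ₂) = log E[exp(λ₁ T̃ + λ₂ |T̃|)] denote the log moment generating function of (T̃, |T̃|). Let 𝒟 = {(λ₁,λ₂) ∈ ℝ² : |λ₁| + λ₂ ≤ D(1/2‖p)}. Then for every (λ₁,λ₂) ∈ 𝒟, the expectation E[exp(λ₁ T̃ + λ₂ |T̃|)] is finite and L(λ₁,λ₂) ≤ log(1/(2p)); and for every (λ₁,λ₂) ∉ 𝒟, the expectation E[exp(λ₁ T̃ + λ₂ |T̃|)] is infinite, i.e., L(λ₁,λ₂) = +∞. -/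
open scoped ENNReal

noncomputable section

/-- Kullback–Leibler divergence `D(1/2 ‖ p)` between Bernoulli(1/2) and Bernoulli(p). -/
def Dhalf (p : ℝ) : ℝ := (1/2) * Real.log ((1/2)/p) + (1/2) * Real.log ((1/2)/(1-p))

/-- `E[exp(λ₁ T̃ + λ₂ |T̃|)]` computed (in `ℝ≥0∞`) from the explicit distribution
`P(T̃ = 2k) = P(T̃ = −2k) = (1/(2p))(p(1−p))^k C_{k−1}` for `k ≥ 1`:
the series `∑_{k≥1} (1/(2p))(p(1−p))^k C_{k−1} (e^{2k(λ₁+λ₂)} + e^{2k(λ₂−λ₁)})`,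
reindexed by `k = j + 1`. -/
def sojournMGF (p l1 l2 : ℝ) : ℝ≥0∞ :=
  ∑' j : ℕ, ENNReal.ofReal
    ((1/(2*p)) * (p*(1-p))^(j+1) * (catalan j : ℝ) *
      (Real.exp (2*((j:ℝ)+1)*(l1+l2)) + Real.exp (2*((j:ℝ)+1)*(l2-l1))))

open Finset Filter

/-- triangle sum swap -/
lemma tri_swap (f : ℕ → ℕ → ℝ) (n : ℕ) :
    ∑ j ∈ range n, ∑ i ∈ range (j+1), f i (j-i)
      = ∑ i ∈ range n, ∑ k ∈ range (n-i), f i k := by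
  induction n with
  | zero => simp
  | succ n ih =>
    have h1 : ∑ i ∈ range n, ∑ k ∈ range (n+1-i), f i k
        = ∑ i ∈ range n, (∑ k ∈ range (n-i), f i k + f i (n-i)) := by
      refine Finset.sum_congr rfl fun i hi => ?_
      have hi' : i < n := Finset.mem_range.mp hi
      have h2 : n+1-i = (n-i)+1 := by omega
      rw [h2, Finset.sum_range_succ]
    rw [Finset.sum_range_succ (fun i => ∑ k ∈ range (n+1-i), f i k), h1,
      Finset.sum_add_distrib, Finset.sum_range_succ (fun j => ∑ i ∈ range (j+1), f i (j-i)), ih,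
      Finset.sum_range_succ (fun i => f i (n-i))]
    simp only [Nat.sub_self, Nat.add_sub_cancel_left]
    simp
    ring

lemma conv_sum_le (a : ℕ → ℝ) (ha : ∀ j, 0 ≤ a j) (n : ℕ) :
    ∑ j ∈ range n, ∑ i ∈ range (j+1), a i * a (j-i)
      ≤ (∑ i ∈ range n, a i) * (∑ i ∈ range n, a i) := by
  calc ∑ j ∈ range n, ∑ i ∈ range (j+1), a i * a (j-i)
      = ∑ i ∈ range n, ∑ k ∈ range (n-i), a i * a k := tri_swap (fun i k => a i * a k) n
    _ ≤ ∑ i ∈ range n, ∑ k ∈ range n, a i * a k := by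
        refine Finset.sum_le_sum fun i _ => ?_
        refine Finset.sum_le_sum_of_subset_of_nonneg ?_ fun k _ _ => mul_nonneg (ha i) (ha k)
        exact Finset.range_subset_range.mpr (Nat.sub_le n i)
    _ = (∑ i ∈ range n, a i) * (∑ i ∈ range n, a i) := (Finset.sum_mul_sum (range n) (range n) a a).symm

/-- Catalan convolution in ℝ with powers -/
lemma catalan_conv (x : ℝ) (j : ℕ) :
    (catalan (j+1) : ℝ) * x^(j+2)
      = ∑ i ∈ range (j+1), ((catalan i : ℝ) * x^(i+1)) * ((catalan (j-i) : ℝ) * x^((j-i)+1)) := by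
  have hcast : ((catalan (j+1) : ℕ) : ℝ)
      = ∑ i ∈ range (j+1), (catalan i : ℝ) * (catalan (j-i) : ℝ) := by
    rw [catalan_succ]
    push_cast
    exact Fin.sum_univ_eq_sum_range (fun i => ((catalan i : ℝ) * (catalan (j - i) : ℝ))) (j+1)
  rw [hcast, Finset.sum_mul]
  refine Finset.sum_congr rfl fun i hi => ?_
  have hij : i ≤ j := Nat.lt_succ_iff.mp (Finset.mem_range.mp hi)
  have h2 : (i+1) + ((j-i)+1) = j + 2 := by omega
  rw [mul_mul_mul_comm, ← pow_add, h2]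

/-- partial sums of Catalan generating series are at most 1/2 on [0,1/4] -/
lemma catalan_partial_sum_le {x : ℝ} (hx0 : 0 ≤ x) (hx : x ≤ 1/4) (n : ℕ) :
    ∑ j ∈ range n, (catalan j : ℝ) * x^(j+1) ≤ 1/2 := by
  induction n with
  | zero => norm_num
  | succ n ih =>
    have ha0 : ∀ j : ℕ, 0 ≤ (catalan j : ℝ) * x^(j+1) := fun j => by positivity
    have key : ∑ j ∈ range n, (catalan (j+1) : ℝ) * x^((j+1)+1) ≤ 1/4 := by
      have h1 : ∑ j ∈ range n, (catalan (j+1) : ℝ) * x^((j+1)+1)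
          = ∑ j ∈ range n, ∑ i ∈ range (j+1),
              ((catalan i : ℝ) * x^(i+1)) * ((catalan (j-i) : ℝ) * x^((j-i)+1)) :=
        Finset.sum_congr rfl fun j _ => catalan_conv x j
      have h2 := conv_sum_le (fun j => (catalan j : ℝ) * x^(j+1)) ha0 n
      have h0 : (0:ℝ) ≤ ∑ i ∈ range n, (catalan i : ℝ) * x^(i+1) :=
        Finset.sum_nonneg fun i _ => ha0 i
      have h3 : (∑ i ∈ range n, (catalan i : ℝ) * x^(i+1))
          * (∑ i ∈ range n, (catalan i : ℝ) * x^(i+1)) ≤ (1/2) * (1/2) :=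
        mul_le_mul ih ih h0 (by norm_num)
      rw [h1]
      calc _ ≤ _ := h2
        _ ≤ (1/2)*(1/2) := h3
        _ = 1/4 := by norm_num
    rw [Finset.sum_range_succ' (fun j => (catalan j : ℝ) * x^(j+1)) n]
    have ha00 : (catalan 0 : ℝ) * x^(0+1) = x := by simp
    rw [ha00]
    linarith

/-- summability and tsum bound -/
lemma catalan_summable {x : ℝ} (hx0 : 0 ≤ x) (hx : x ≤ 1/4) :
    Summable (fun j : ℕ => (catalan j : ℝ) * x^(j+1)) :=
  summable_of_sum_range_le (fun j => by positivity) (catalan_partial_sum_le hx0 hx)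

lemma catalan_tsum_le {x : ℝ} (hx0 : 0 ≤ x) (hx : x ≤ 1/4) :
    ∑' j : ℕ, (catalan j : ℝ) * x^(j+1) ≤ 1/2 :=
  Real.tsum_le_of_sum_range_le (fun j => by positivity) (catalan_partial_sum_le hx0 hx)



lemma exp_two_Dhalf {p : ℝ} (hp0 : 0 < p) (hp1 : p < 1) :
    Real.exp (2 * Dhalf p) = 1 / (4 * (p * (1-p))) := by
  have h1 : (0:ℝ) < 1 - p := by linarith
  have : 2 * Dhalf p = Real.log ((1/2)/p) + Real.log ((1/2)/(1-p)) := by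
    unfold Dhalf; ring
  rw [this, Real.exp_add, Real.exp_log (by positivity), Real.exp_log (by positivity)]
  field_simp
  ring

lemma cond_iff {p : ℝ} (hp0 : 0 < p) (hp1 : p < 1) (t : ℝ) :
    p * (1-p) * Real.exp (2*t) ≤ 1/4 ↔ t ≤ Dhalf p := by
  have h1 : (0:ℝ) < 1 - p := by linarith
  have hpq : (0:ℝ) < p * (1-p) := by positivity
  constructor
  · intro h
    have h2 : Real.exp (2*t) ≤ Real.exp (2*Dhalf p) := by
      rw [exp_two_Dhalf hp0 hp1, le_div_iff₀ (by positivity)]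
      nlinarith
    have := Real.exp_le_exp.mp h2
    linarith
  · intro h
    have h2 : Real.exp (2*t) ≤ Real.exp (2*Dhalf p) := Real.exp_le_exp.mpr (by linarith)
    rw [exp_two_Dhalf hp0 hp1, le_div_iff₀ (by positivity)] at h2
    nlinarith

lemma catalan_lb (j : ℕ) : (4:ℝ)^j ≤ ((2*(j:ℝ)+1)*((j:ℝ)+1)) * (catalan j : ℝ) := by
  rcases Nat.eq_zero_or_pos j with rfl | hj
  · norm_num
  · have h1 := Nat.four_pow_le_two_mul_self_mul_centralBinom j hj
    have h2 := succ_mul_catalan_eq_centralBinom j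
    have h3 : (4:ℕ)^j ≤ 2 * j * ((j+1) * catalan j) := by rw [h2]; exact h1
    have h4 : ((4^j : ℕ) : ℝ) ≤ ((2 * j * ((j+1) * catalan j) : ℕ) : ℝ) := Nat.cast_le.mpr h3
    push_cast at h4
    nlinarith [(Nat.cast_nonneg (catalan j) : (0:ℝ) ≤ (catalan j : ℝ)), (Nat.cast_nonneg j : (0:ℝ) ≤ (j:ℝ))]

lemma poly_div_pow_tendsto {r : ℝ} (hr : 1 < r) :
    Tendsto (fun j : ℕ => ((2*(j:ℝ)+1)*((j:ℝ)+1)) / r^j) atTop (nhds 0) := by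
  have h2 := tendsto_pow_const_div_const_pow_of_one_lt 2 hr
  have h1 := tendsto_pow_const_div_const_pow_of_one_lt 1 hr
  have h0 := tendsto_pow_const_div_const_pow_of_one_lt 0 hr
  have := ((h2.const_mul 2).add ((h1.const_mul 3).add h0))
  simp only [mul_zero, add_zero, zero_add] at this
  convert this using 2 with j
  field_simp
  ring

/-- If the terms dominate `(1/(2p)) C_j x^{j+1}` with `x > 1/4`, the ENNReal series is ⊤. -/
lemma tsum_top_of_catalan_lb {p x : ℝ} (hp : 0 < p) (hx : 1/4 < x) (f : ℕ → ℝ)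
    (hf : ∀ j, (1/(2*p)) * ((catalan j : ℝ) * x^(j+1)) ≤ f j) :
    ∑' j : ℕ, ENNReal.ofReal (f j) = ⊤ := by
  by_contra h
  have htend := ENNReal.tendsto_atTop_zero_of_tsum_ne_top h
  have hx0 : (0:ℝ) < x := by linarith
  have hr : 1 < 4*x := by linarith
  have hcpos : (0:ℝ) < x / (2*p) := by positivity
  have hev1 : ∀ᶠ j : ℕ in atTop, ((2*(j:ℝ)+1)*((j:ℝ)+1)) / (4*x)^j < x/(2*p) :=
    (poly_div_pow_tendsto hr).eventually (Filter.Tendsto.eventually_lt_const hcpos tendsto_id) |>.mono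
      (fun _ h => h)
  have hev2 : ∀ᶠ j : ℕ in atTop, ENNReal.ofReal (f j) < 1 :=
    htend.eventually (Filter.Tendsto.eventually_lt_const (by norm_num : (0:ℝ≥0∞) < 1) tendsto_id) |>.mono
      (fun _ h => h)
  obtain ⟨j, hj1, hj2⟩ := (hev1.and hev2).exists
  have hgpos : (0:ℝ) < ((2*(j:ℝ)+1)*((j:ℝ)+1)) / (4*x)^j := by positivity
  -- from hj1 : g j < x/(2p) get 1 ≤ f j
  have hfj : (1:ℝ) ≤ f j := by
    have hcb := catalan_lb j
    have hxp : (0:ℝ) < (4*x)^j := by positivity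
    have key : (1:ℝ) ≤ (1/(2*p)) * ((catalan j : ℝ) * x^(j+1)) := by
      have hpow : x^(j+1) = x * x^j := by ring
      have h4 : (x/(2*p)) / (((2*(j:ℝ)+1)*((j:ℝ)+1)) / (4*x)^j) > 1 := by
        rw [gt_iff_lt, lt_div_iff₀ hgpos, one_mul]
        exact hj1
      have hcat : (catalan j : ℝ) ≥ (4:ℝ)^j / ((2*(j:ℝ)+1)*((j:ℝ)+1)) := by
        rw [ge_iff_le, div_le_iff₀ (by positivity)]
        linarith [catalan_lb j]
      calc (1:ℝ) ≤ (x/(2*p)) / (((2*(j:ℝ)+1)*((j:ℝ)+1)) / (4*x)^j) := le_of_lt h4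
        _ = (1/(2*p)) * (((4:ℝ)^j / ((2*(j:ℝ)+1)*((j:ℝ)+1))) * x^(j+1)) := by
            rw [hpow, mul_pow]
            field_simp
        _ ≤ (1/(2*p)) * ((catalan j : ℝ) * x^(j+1)) := by gcongr

    exact le_trans key (hf j)
  rw [show (1:ℝ≥0∞) = ENNReal.ofReal 1 by simp] at hj2
  have := (ENNReal.ofReal_lt_ofReal_iff (by norm_num)).mp hj2
  linarith


/-- With `𝒟 = {(λ₁,λ₂) : |λ₁| + λ₂ ≤ D(1/2‖p)}`: for `(λ₁,λ₂) ∈ 𝒟` the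
expectation `E[exp(λ₁T̃+λ₂|T̃|)]` is finite and its logarithm is at most `log(1/(2p))`;
for `(λ₁,λ₂) ∉ 𝒟` the expectation is infinite. -/
theorem stmt1 (p l1 l2 : ℝ) (hp : p ∈ Set.Ioo (0:ℝ) (1/2)) :
    (|l1| + l2 ≤ Dhalf p →
      sojournMGF p l1 l2 ≠ ⊤ ∧
      Real.log (sojournMGF p l1 l2).toReal ≤ Real.log (1/(2*p))) ∧
    (¬ (|l1| + l2 ≤ Dhalf p) → sojournMGF p l1 l2 = ⊤) := by
  obtain ⟨hp0, hp2⟩ := hp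
  have hp1 : p < 1 := by linarith
  have hq : (0:ℝ) < 1 - p := by linarith
  set xP : ℝ := p*(1-p) * Real.exp (2*(l1+l2)) with hxPdef
  set xM : ℝ := p*(1-p) * Real.exp (2*(l2-l1)) with hxMdef
  have hxP0 : 0 ≤ xP := by rw [hxPdef]; positivity
  have hxM0 : 0 ≤ xM := by rw [hxMdef]; positivity
  have hterm : ∀ j : ℕ, (1/(2*p)) * (p*(1-p))^(j+1) * (catalan j : ℝ) *
        (Real.exp (2*((j:ℝ)+1)*(l1+l2)) + Real.exp (2*((j:ℝ)+1)*(l2-l1)))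
      = (1/(2*p)) * ((catalan j:ℝ) * xP^(j+1) + (catalan j:ℝ) * xM^(j+1)) := by
    intro j
    have e1 : Real.exp (2*((j:ℝ)+1)*(l1+l2)) = (Real.exp (2*(l1+l2)))^(j+1) := by
      rw [← Real.exp_nat_mul]; congr 1; push_cast; ring
    have e2 : Real.exp (2*((j:ℝ)+1)*(l2-l1)) = (Real.exp (2*(l2-l1)))^(j+1) := by
      rw [← Real.exp_nat_mul]; congr 1; push_cast; ring
    rw [e1, e2, hxPdef, hxMdef]
    simp only [mul_pow]
    ring
  constructor
  · -- finite case
    intro h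
    have hP4 : xP ≤ 1/4 := by
      rw [hxPdef]
      exact (cond_iff hp0 hp1 (l1+l2)).mpr (by linarith [le_abs_self l1])
    have hM4 : xM ≤ 1/4 := by
      rw [hxMdef]
      exact (cond_iff hp0 hp1 (l2-l1)).mpr (by linarith [neg_abs_le l1])
    have hsP := catalan_summable hxP0 hP4
    have hsM := catalan_summable hxM0 hM4
    have htP := catalan_tsum_le hxP0 hP4
    have htM := catalan_tsum_le hxM0 hM4
    set c : ℕ → ℝ := fun j => (1/(2*p)) * ((catalan j:ℝ) * xP^(j+1) + (catalan j:ℝ) * xM^(j+1))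
      with hcdef
    have hc0 : ∀ j, 0 ≤ c j := fun j => by
      have := hxP0; have := hxM0
      rw [hcdef]
      positivity
    have hsc : Summable c := (hsP.add hsM).mul_left _
    have hrw : sojournMGF p l1 l2 = ENNReal.ofReal (∑' j, c j) := by
      unfold sojournMGF
      calc (∑' j : ℕ, ENNReal.ofReal ((1/(2*p)) * (p*(1-p))^(j+1) * (catalan j : ℝ) *
              (Real.exp (2*((j:ℝ)+1)*(l1+l2)) + Real.exp (2*((j:ℝ)+1)*(l2-l1)))))
          = ∑' j : ℕ, ENNReal.ofReal (c j) := tsum_congr fun j => by rw [hterm j, hcdef]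
        _ = ENNReal.ofReal (∑' j, c j) := (ENNReal.ofReal_tsum_of_nonneg hc0 hsc).symm
    have hsum_le : ∑' j, c j ≤ 1/(2*p) := by
      rw [hcdef]
      rw [tsum_mul_left, Summable.tsum_add hsP hsM]
      have h1 : (∑' j : ℕ, (catalan j:ℝ) * xP^(j+1)) + (∑' j : ℕ, (catalan j:ℝ) * xM^(j+1))
          ≤ 1 := by linarith
      have h2 : (0:ℝ) ≤ 1/(2*p) := by positivity
      calc (1/(2*p)) * ((∑' j : ℕ, (catalan j:ℝ) * xP^(j+1))
              + (∑' j : ℕ, (catalan j:ℝ) * xM^(j+1)))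
          ≤ (1/(2*p)) * 1 := mul_le_mul_of_nonneg_left h1 h2
        _ = 1/(2*p) := mul_one _
    refine ⟨by rw [hrw]; exact ENNReal.ofReal_ne_top, ?_⟩
    rw [hrw, ENNReal.toReal_ofReal (tsum_nonneg hc0)]
    rcases (tsum_nonneg hc0 : (0:ℝ) ≤ ∑' j, c j).eq_or_lt with h0 | h0
    · rw [← h0, Real.log_zero]
      apply Real.log_nonneg
      rw [le_div_iff₀ (by positivity)]
      linarith
    · exact Real.log_le_log h0 hsum_le
  · -- infinite case
    intro h
    push_neg at h
    unfold sojournMGF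
    rcases abs_cases l1 with ⟨he, _⟩ | ⟨he, _⟩
    · have hgt : 1/4 < xP := by
        rw [hxPdef]
        by_contra hle
        push_neg at hle
        have := (cond_iff hp0 hp1 (l1+l2)).mp hle
        rw [he] at h
        linarith
      refine tsum_top_of_catalan_lb hp0 hgt _ fun j => ?_
      rw [hterm j]
      have hB : (0:ℝ) ≤ (catalan j:ℝ) * xM^(j+1) := by positivity
      have h2 : (0:ℝ) ≤ 1/(2*p) := by positivity
      nlinarith
    · have hgt : 1/4 < xM := by
        rw [hxMdef]
        by_contra hle
        push_neg at hle
        have := (cond_iff hp0 hp1 (l2-l1)).mp hle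
        rw [he] at h
        linarith
      refine tsum_top_of_catalan_lb hp0 hgt _ fun j => ?_
      rw [hterm j]
      have hB : (0:ℝ) ≤ (catalan j:ℝ) * xP^(j+1) := by positivity
      have h2 : (0:ℝ) ≤ 1/(2*p) := by positivity
      nlinarith
end
end

section
/- Let p ∈ (0,1/2) and δ ∈ [0,1/2]. Then lim_{n→∞} (1/n) log P(M_n ≤ n(1−δ) and B > n) = −D(1/2‖p). -/
/-!
A path of length `m` ending at `0` has `m / 2` up-steps, hence probability `√(p(1-p))^m`. So with
`θ = 2√(p(1-p))`, for which `log θ = -D(1/2‖p)`, we get `P(X_m = 0) ≤ θ^m`, and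
`P(X_{2k} = 0) ≥ θ^{2k} / (2k+1)` from the central binomial coefficient.
Upper bound: `{B > n} ⊆ ⋃_{m > n} {X_m = 0}`, a geometric tail of size `O(θ^n)`.
Lower bound: flipping every step maps bridges to bridges and `M_n` to `n - M_n`, so at least half
of the bridges of length `2k ∈ (n, n + 2]` have `M_n ≤ n / 2 ≤ n(1 - δ)`, and they visit `0` after
time `n`.
-/

open MeasureTheory ProbabilityTheory Filter

noncomputable section

variable {Ω : Type*} [MeasurableSpace Ω]

/-- The random walk `X_n = Y_1 + ⋯ + Y_n` (here the steps are indexed `Y 0, Y 1, …`). -/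
def walk (Y : ℕ → Ω → ℤ) (n : ℕ) (ω : Ω) : ℤ := ∑ i ∈ Finset.range n, Y i ω

/-- The sign process `X̂_n`: `+1` if `X_n > 0`, `-1` if `X_n < 0`, previous value if `X_n = 0`,
with `X̂_0 = +1`. -/
def sgnProc (Y : ℕ → Ω → ℤ) : ℕ → Ω → ℤ
  | 0 => fun _ => 1
  | n+1 => fun ω =>
      if 0 < walk Y (n+1) ω then 1
      else if walk Y (n+1) ω < 0 then -1
      else sgnProc Y n ω

/-- `M_n = #{1 ≤ i ≤ n : X̂_i = +1}`. -/
def Mcount (Y : ℕ → Ω → ℤ) (n : ℕ) (ω : Ω) : ℕ :=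
  ((Finset.Icc 1 n).filter fun i => sgnProc Y i ω = 1).card

open scoped ENNReal

section Deterministic

variable {α β : Type*} {Y : ℕ → α → ℤ} {ω : α} {n : ℕ}

lemma walk_congr {Y' : ℕ → β → ℤ} {ω' : β} (h : ∀ j < n, Y j ω = Y' j ω') :
    walk Y n ω = walk Y' n ω' :=
  Finset.sum_congr rfl fun j hj => h j (Finset.mem_range.1 hj)

lemma sgnProc_congr {Y' : ℕ → β → ℤ} {ω' : β} :
    ∀ {n}, (∀ j < n, Y j ω = Y' j ω') → sgnProc Y n ω = sgnProc Y' n ω'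
  | 0, _ => rfl
  | _ + 1, h => by
    simp only [sgnProc, walk_congr h, sgnProc_congr fun j hj => h j (Nat.lt_succ_of_lt hj)]

lemma Mcount_congr {Y' : ℕ → β → ℤ} {ω' : β} (h : ∀ j < n, Y j ω = Y' j ω') :
    Mcount Y n ω = Mcount Y' n ω' := by
  unfold Mcount
  congr 1
  refine Finset.filter_congr fun i hi => ?_
  rw [sgnProc_congr fun j hj => h j (hj.trans_le (Finset.mem_Icc.1 hi).2)]

lemma sgnProc_eq_one_or_eq_neg_one : ∀ n, sgnProc Y n ω = 1 ∨ sgnProc Y n ω = -1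
  | 0 => Or.inl rfl
  | n + 1 => by
    simp only [sgnProc]
    split_ifs
    exacts [Or.inl rfl, Or.inr rfl, sgnProc_eq_one_or_eq_neg_one n]

lemma walk_neg : walk (-Y) n ω = -walk Y n ω := by
  simp [walk]

lemma sgnProc_neg (h0 : Y 0 ω ≠ 0) : ∀ {n}, n ≠ 0 → sgnProc (-Y) n ω = -sgnProc Y n ω
  | n + 1, _ => by
    rcases lt_trichotomy (walk Y (n + 1) ω) 0 with h | h | h
    · simp [sgnProc, walk_neg, h, h.not_gt]
    · have hn : n ≠ 0 := by
        rintro rfl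
        exact h0 (by simpa [walk] using h)
      simp [sgnProc, walk_neg, h, sgnProc_neg h0 hn]
    · simp [sgnProc, walk_neg, h, h.not_gt]

lemma Mcount_neg (h0 : Y 0 ω ≠ 0) : Mcount (-Y) n ω = n - Mcount Y n ω := by
  have hflip : (Finset.Icc 1 n).filter (fun i => sgnProc (-Y) i ω = 1)
      = (Finset.Icc 1 n).filter (fun i => ¬ sgnProc Y i ω = 1) := by
    refine Finset.filter_congr fun i hi => ?_
    rw [sgnProc_neg h0 (Nat.one_le_iff_ne_zero.1 (Finset.mem_Icc.1 hi).1)]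
    rcases sgnProc_eq_one_or_eq_neg_one (Y := Y) (ω := ω) i with h | h <;> simp [h]
  rw [Mcount, Mcount, hflip, Finset.filter_not,
    Finset.card_sdiff_of_subset (Finset.filter_subset _ _), Nat.card_Icc, Nat.add_sub_cancel]

end Deterministic

section PathSpace

open Finset

variable {α : Type*} {m : ℕ}

/- `Fin m → Bool` records the first `m` steps and `pathStep m` is the canonical walk on it, so
`walk` and `Mcount` up to time `m` apply to paths verbatim; the value `0` beyond time `m` is never
read. -/
def pathStep (m j : ℕ) (b : Fin m → Bool) : ℤ :=
  if h : j < m then (if b ⟨j, h⟩ then 1 else -1) else 0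

def signPath (Y : ℕ → α → ℤ) (m : ℕ) (ω : α) : Fin m → Bool := fun i => Y i ω = 1

def balanced (m : ℕ) : Finset (Fin m → Bool) := univ.filter fun b => walk (pathStep m) m b = 0

def bridges (n m : ℕ) : Finset (Fin m → Bool) :=
  (balanced m).filter fun b => 2 * Mcount (pathStep m) n b ≤ n

lemma bridges_subset_balanced {n : ℕ} : bridges n m ⊆ balanced m := filter_subset _ _

lemma pathStep_signPath {Y : ℕ → α → ℤ} {ω : α} (hrange : ∀ i, Y i ω = 1 ∨ Y i ω = -1)
    {j : ℕ} (hj : j < m) : pathStep m j (signPath Y m ω) = Y j ω := by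
  rcases hrange j with h | h <;> simp [pathStep, signPath, hj, h]

lemma pathStep_not (b : Fin m → Bool) {j : ℕ} (hj : j < m) :
    pathStep m j (fun i => !b i) = (-pathStep m) j b := by
  cases h : b ⟨j, hj⟩ <;> simp [pathStep, hj, h]

lemma walk_signPath {Y : ℕ → α → ℤ} {ω : α} (hrange : ∀ i, Y i ω = 1 ∨ Y i ω = -1) {n : ℕ}
    (hn : n ≤ m) : walk (pathStep m) n (signPath Y m ω) = walk Y n ω :=
  walk_congr fun _ hj => pathStep_signPath hrange (hj.trans_le hn)

lemma Mcount_signPath {Y : ℕ → α → ℤ} {ω : α} (hrange : ∀ i, Y i ω = 1 ∨ Y i ω = -1) {n : ℕ}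
    (hn : n ≤ m) : Mcount (pathStep m) n (signPath Y m ω) = Mcount Y n ω :=
  Mcount_congr fun _ hj => pathStep_signPath hrange (hj.trans_le hn)

lemma walk_pathStep (b : Fin m → Bool) :
    walk (pathStep m) m b = 2 * #{i | b i} - m := by
  have hcard := card_filter_add_card_filter_not (s := univ) (fun i => b i = true)
  rw [card_univ, Fintype.card_fin] at hcard
  rw [walk, ← Fin.sum_univ_eq_sum_range (fun j => pathStep m j b), sum_congr rfl
    fun i _ => dif_pos i.2, sum_ite, sum_const, sum_const]
  simp only [Fin.eta, nsmul_eq_mul, mul_one, mul_neg_one]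
  omega

lemma mem_balanced {b : Fin m → Bool} : b ∈ balanced m ↔ 2 * #{i | b i} = m := by
  simp only [balanced, mem_filter, mem_univ, true_and, walk_pathStep]
  omega

lemma centralBinom_le_card_balanced (k : ℕ) : k.centralBinom ≤ #(balanced (2 * k)) :=
  calc k.centralBinom = #(powersetCard k (univ : Finset (Fin (2 * k)))) := by
        simp [Nat.centralBinom]
    _ ≤ #(balanced (2 * k)) := by
        refine card_le_card_of_injOn (fun s i => i ∈ s) (fun s hs => ?_) fun s _ t _ h => ?_
        · rw [mem_coe, mem_balanced]
          simp [(mem_powersetCard.1 (mem_coe.1 hs)).2]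
        · ext i
          simpa using congrFun h i

/- Flipping every step preserves balance and turns `Mcount n` into `n - Mcount n`, so it injects the
balanced paths outside `bridges n m` into `bridges n m`. -/
lemma card_balanced_le_two_mul_card_bridges {n : ℕ} (hn : n ≤ m) (hm : 0 < m) :
    #(balanced m) ≤ 2 * #(bridges n m) := by
  have hwalk (b : Fin m → Bool) :
      walk (pathStep m) m (fun i => !b i) = -walk (pathStep m) m b := by
    rw [walk_congr fun j hj => pathStep_not b hj, walk_neg]
  have hMcount (b : Fin m → Bool) :
      Mcount (pathStep m) n (fun i => !b i) = n - Mcount (pathStep m) n b := by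
    have h0 : pathStep m 0 b ≠ 0 := by
      unfold pathStep
      split_ifs <;> simp
    rw [Mcount_congr fun j hj => pathStep_not b (hj.trans_le hn), Mcount_neg h0]
  have hmaps : ∀ b ∈ balanced m \ bridges n m, (fun i => !b i) ∈ bridges n m := by
    intro b hb
    obtain ⟨hbal, hbridge⟩ := mem_sdiff.1 hb
    have hlarge : n < 2 * Mcount (pathStep m) n b := by simpa [bridges, hbal] using hbridge
    simp only [balanced, mem_filter, mem_univ, true_and] at hbal
    simp only [bridges, balanced, mem_filter, mem_univ, true_and]
    rw [hwalk, hbal, hMcount]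
    omega
  have hinj : Set.InjOn (fun (b : Fin m → Bool) i => !b i) ↑(balanced m \ bridges n m) :=
    fun b _ c _ h => funext fun i => by simpa using congrFun h i
  have hhalf := card_le_card_of_injOn _ hmaps hinj
  have hsplit := card_sdiff_add_card_eq_card (bridges_subset_balanced (n := n) (m := m))
  omega

lemma preimage_signPath_balanced {Y : ℕ → α → ℤ} (hrange : ∀ i ω, Y i ω = 1 ∨ Y i ω = -1) :
    signPath Y m ⁻¹' balanced m = {ω | walk Y m ω = 0} := by
  ext ω
  simp [balanced, walk_signPath (hrange · ω) le_rfl]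

lemma preimage_signPath_bridges {Y : ℕ → α → ℤ} (hrange : ∀ i ω, Y i ω = 1 ∨ Y i ω = -1)
    {n : ℕ} (hn : n ≤ m) :
    signPath Y m ⁻¹' bridges n m = {ω | 2 * Mcount Y n ω ≤ n ∧ walk Y m ω = 0} := by
  ext ω
  simp [bridges, balanced, walk_signPath (hrange · ω) le_rfl, Mcount_signPath (hrange · ω) hn,
    and_comm]

end PathSpace

section Bernoulli

open Finset

variable {μ : Measure Ω} [IsProbabilityMeasure μ] {Y : ℕ → Ω → ℤ} {m : ℕ} {p : ℝ}

def pathWeight (p : ℝ) (b : Fin m → Bool) : ℝ≥0∞ :=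
  ∏ i, if b i then ENNReal.ofReal (1 - p) else ENNReal.ofReal p

lemma pathWeight_of_mem_balanced (hp0 : 0 ≤ p) (hp1 : p ≤ 1) {b : Fin m → Bool}
    (hb : b ∈ balanced m) : pathWeight p b = ENNReal.ofReal (Real.sqrt (p * (1 - p))) ^ m := by
  have hup := mem_balanced.1 hb
  have hcard := card_filter_add_card_filter_not (s := univ) (fun i => b i = true)
  rw [card_univ, Fintype.card_fin] at hcard
  have hdown : #{i | ¬ b i = true} = #{i | b i = true} := by omega
  rw [pathWeight, prod_ite, prod_const, prod_const, hdown, ← mul_pow,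
    ← ENNReal.ofReal_mul (by linarith)]
  conv_rhs => rw [← hup, pow_mul, ← ENNReal.ofReal_pow (Real.sqrt_nonneg _),
    Real.sq_sqrt (by nlinarith), mul_comm]

lemma measure_signPath_preimage (hp1 : p ≤ 1) (hmeas : ∀ i, Measurable (Y i))
    (hdist : ∀ i, μ {ω | Y i ω = 1} = ENNReal.ofReal (1 - p)) (hindep : iIndepFun Y μ)
    (S : Finset (Fin m → Bool)) : μ (signPath Y m ⁻¹' S) = ∑ b ∈ S, pathWeight p b := by
  have hpath : Measurable (signPath Y m) := measurable_pi_lambda _ fun i =>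
    (measurable_of_countable fun z : ℤ => decide (z = 1)).comp (hmeas i)
  have hind : iIndepFun (fun (i : Fin m) ω => decide (Y i ω = 1)) μ :=
    (hindep.precomp Fin.val_injective).comp (fun _ z => decide (z = 1))
      fun _ => measurable_of_countable _
  rw [← sum_measure_preimage_singleton S
    fun b _ => hpath (measurableSet_singleton b)]
  refine sum_congr rfl fun b _ => ?_
  have hfiber : signPath Y m ⁻¹' {b}
      = ⋂ i ∈ (univ : Finset (Fin m)), (fun ω => decide (Y i ω = 1)) ⁻¹' {b i} := by
    ext ω
    simp [signPath, funext_iff]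
  rw [hfiber, hind.measure_inter_preimage_eq_mul _ fun _ _ => measurableSet_singleton _, pathWeight]
  refine prod_congr rfl fun i _ => ?_
  cases b i
  · have hfalse : (fun ω => decide (Y i ω = 1)) ⁻¹' {false} = {ω | Y i ω = 1}ᶜ := by
      ext
      simp
    rw [hfalse, prob_compl_eq_one_sub (measurableSet_eq_fun (hmeas i) measurable_const), hdist,
      ← ENNReal.ofReal_one, ← ENNReal.ofReal_sub _ (by linarith)]
    simp
  · have htrue : (fun ω => decide (Y i ω = 1)) ⁻¹' {true} = {ω | Y i ω = 1} := by
      ext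
      simp
    simp [htrue, hdist]

lemma measure_signPath_preimage_of_subset_balanced (hp0 : 0 ≤ p) (hp1 : p ≤ 1)
    (hmeas : ∀ i, Measurable (Y i)) (hdist : ∀ i, μ {ω | Y i ω = 1} = ENNReal.ofReal (1 - p))
    (hindep : iIndepFun Y μ) {S : Finset (Fin m → Bool)} (hS : S ⊆ balanced m) :
    μ (signPath Y m ⁻¹' S) = #S * ENNReal.ofReal (Real.sqrt (p * (1 - p))) ^ m := by
  rw [measure_signPath_preimage hp1 hmeas hdist hindep,
    sum_congr rfl fun b hb => pathWeight_of_mem_balanced hp0 hp1 (hS hb), sum_const, nsmul_eq_mul]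

end Bernoulli

section LargeDeviations

variable {μ : Measure Ω} [IsProbabilityMeasure μ] {Y : ℕ → Ω → ℤ} {p : ℝ}

def decayRate (p : ℝ) : ℝ := 2 * Real.sqrt (p * (1 - p))

lemma decayRate_nonneg : 0 ≤ decayRate p := by
  unfold decayRate
  positivity

lemma decayRate_pos (hp0 : 0 < p) (hp1 : p < 1) : 0 < decayRate p :=
  mul_pos two_pos (Real.sqrt_pos.2 (mul_pos hp0 (sub_pos.2 hp1)))

lemma decayRate_lt_one (hp : p ≠ 1 / 2) : decayRate p < 1 := by
  have hlt : p * (1 - p) < (1 / 2) ^ 2 := by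
    nlinarith [sq_pos_of_ne_zero (sub_ne_zero.2 hp)]
  have := (Real.sqrt_lt' (by norm_num : (0 : ℝ) < 1 / 2)).2 hlt
  rw [decayRate]
  linarith

lemma decayRate_le_one : decayRate p ≤ 1 := by
  have hle : p * (1 - p) ≤ (1 / 2) ^ 2 := by nlinarith [sq_nonneg (p - 1 / 2)]
  have := Real.sqrt_le_sqrt hle
  rw [Real.sqrt_sq (by norm_num)] at this
  rw [decayRate]
  linarith

lemma log_decayRate (hp0 : 0 < p) (hp1 : p < 1) : Real.log (decayRate p) = -Dhalf p := by
  have hq : 0 < 1 - p := sub_pos.2 hp1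
  rw [decayRate, Real.log_mul two_ne_zero (Real.sqrt_pos.2 (mul_pos hp0 hq)).ne',
    Real.log_sqrt (mul_pos hp0 hq).le, Real.log_mul hp0.ne' hq.ne', Dhalf,
    Real.log_div (by norm_num) hp0.ne', Real.log_div (by norm_num) hq.ne', one_div, Real.log_inv]
  ring

lemma measure_walk_eq_zero_le (hp0 : 0 ≤ p) (hp1 : p ≤ 1) (hmeas : ∀ i, Measurable (Y i))
    (hrange : ∀ i ω, Y i ω = 1 ∨ Y i ω = -1)
    (hdist : ∀ i, μ {ω | Y i ω = 1} = ENNReal.ofReal (1 - p)) (hindep : iIndepFun Y μ) (m : ℕ) :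
    μ {ω | walk Y m ω = 0} ≤ ENNReal.ofReal (decayRate p) ^ m := by
  rw [← preimage_signPath_balanced hrange,
    measure_signPath_preimage_of_subset_balanced hp0 hp1 hmeas hdist hindep subset_rfl, decayRate,
    ENNReal.ofReal_mul zero_le_two, mul_pow, ENNReal.ofReal_ofNat]
  gcongr
  calc ((balanced m).card : ℝ≥0∞) ≤ ((2 ^ m : ℕ) : ℝ≥0∞) := by
        exact_mod_cast (Finset.card_filter_le _ _).trans (by simp)
    _ = 2 ^ m := by push_cast; rfl

lemma measure_exists_walk_eq_zero_le (hp0 : 0 ≤ p) (hp1 : p ≤ 1) (hθ : decayRate p < 1)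
    (hmeas : ∀ i, Measurable (Y i)) (hrange : ∀ i ω, Y i ω = 1 ∨ Y i ω = -1)
    (hdist : ∀ i, μ {ω | Y i ω = 1} = ENNReal.ofReal (1 - p)) (hindep : iIndepFun Y μ) (n : ℕ) :
    μ {ω | ∃ m, n < m ∧ walk Y m ω = 0}
      ≤ ENNReal.ofReal (decayRate p ^ (n + 1) / (1 - decayRate p)) := by
  have hsub : {ω | ∃ m, n < m ∧ walk Y m ω = 0} ⊆ ⋃ j, {ω | walk Y (n + 1 + j) ω = 0} := by
    rintro ω ⟨m, hm, hw⟩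
    refine Set.mem_iUnion.2 ⟨m - (n + 1), ?_⟩
    show walk Y (n + 1 + (m - (n + 1))) ω = 0
    rwa [Nat.add_sub_cancel' hm]
  calc μ {ω | ∃ m, n < m ∧ walk Y m ω = 0}
      ≤ ∑' j, μ {ω | walk Y (n + 1 + j) ω = 0} := (measure_mono hsub).trans (measure_iUnion_le _)
    _ ≤ ∑' j, ENNReal.ofReal (decayRate p) ^ (n + 1 + j) := ENNReal.tsum_le_tsum fun j =>
        measure_walk_eq_zero_le hp0 hp1 hmeas hrange hdist hindep _
    _ = ENNReal.ofReal (decayRate p) ^ (n + 1) * (1 - ENNReal.ofReal (decayRate p))⁻¹ := by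
        simp_rw [pow_add]
        rw [ENNReal.tsum_mul_left, ENNReal.tsum_geometric]
    _ = ENNReal.ofReal (decayRate p ^ (n + 1) / (1 - decayRate p)) := by
        rw [ENNReal.ofReal_div_of_pos (sub_pos.2 hθ), ENNReal.ofReal_pow decayRate_nonneg,
          div_eq_mul_inv, ENNReal.ofReal_sub _ decayRate_nonneg, ENNReal.ofReal_one]

lemma le_measure_two_mul_Mcount_le_and_walk_eq_zero (hp0 : 0 ≤ p) (hp1 : p ≤ 1)
    (hmeas : ∀ i, Measurable (Y i)) (hrange : ∀ i ω, Y i ω = 1 ∨ Y i ω = -1)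
    (hdist : ∀ i, μ {ω | Y i ω = 1} = ENNReal.ofReal (1 - p)) (hindep : iIndepFun Y μ)
    {n k : ℕ} (hn : n ≤ 2 * k) (hk : 0 < k) :
    ENNReal.ofReal (decayRate p ^ (2 * k) / (2 * (2 * k + 1)))
      ≤ μ {ω | 2 * Mcount Y n ω ≤ n ∧ walk Y (2 * k) ω = 0} := by
  rw [← preimage_signPath_bridges hrange hn, measure_signPath_preimage_of_subset_balanced hp0 hp1
    hmeas hdist hindep bridges_subset_balanced, ← ENNReal.ofReal_natCast,
    ← ENNReal.ofReal_pow (Real.sqrt_nonneg _), ← ENNReal.ofReal_mul (Nat.cast_nonneg _)]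
  apply ENNReal.ofReal_le_ofReal
  have hcount : (4 : ℝ) ^ k ≤ (2 * k + 1) * (2 * (bridges n (2 * k)).card) := by
    exact_mod_cast (Nat.four_pow_le_two_mul_add_one_mul_central_binom k).trans
      (Nat.mul_le_mul_left _ ((centralBinom_le_card_balanced k).trans
        (card_balanced_le_two_mul_card_bridges hn (by omega))))
  have hs : 0 ≤ Real.sqrt (p * (1 - p)) ^ (2 * k) := by positivity
  rw [decayRate, mul_pow, pow_mul, show (2 : ℝ) ^ 2 = 4 by norm_num, div_le_iff₀ (by positivity)]
  nlinarith [mul_le_mul_of_nonneg_right hcount hs]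

lemma le_measure_two_mul_Mcount_le_and_exists_walk_eq_zero (hp0 : 0 ≤ p) (hp1 : p ≤ 1)
    (hmeas : ∀ i, Measurable (Y i)) (hrange : ∀ i ω, Y i ω = 1 ∨ Y i ω = -1)
    (hdist : ∀ i, μ {ω | Y i ω = 1} = ENNReal.ofReal (1 - p)) (hindep : iIndepFun Y μ) (n : ℕ) :
    ENNReal.ofReal (decayRate p ^ 2 / 6 * decayRate p ^ n / (n + 1))
      ≤ μ {ω | 2 * Mcount Y n ω ≤ n ∧ ∃ m, n < m ∧ walk Y m ω = 0} := by
  set k := n / 2 + 1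
  refine le_trans ?_ ((le_measure_two_mul_Mcount_le_and_walk_eq_zero hp0 hp1 hmeas hrange hdist
    hindep (n := n) (k := k) (by omega) (by omega)).trans (measure_mono ?_))
  · apply ENNReal.ofReal_le_ofReal
    have hk : (2 * k : ℕ) ≤ n + 2 := by omega
    have hk' : (2 * k : ℝ) ≤ n + 2 := by exact_mod_cast hk
    calc decayRate p ^ 2 / 6 * decayRate p ^ n / (n + 1)
        = decayRate p ^ (n + 2) / (6 * (n + 1)) := by
          field_simp
          ring
      _ ≤ decayRate p ^ (2 * k) / (2 * (2 * k + 1)) :=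
        div_le_div₀ (pow_nonneg decayRate_nonneg _)
          (pow_le_pow_of_le_one decayRate_nonneg decayRate_le_one hk) (by positivity) (by linarith)
  · rintro ω ⟨hM, hw⟩
    exact ⟨hM, 2 * k, by omega, hw⟩

end LargeDeviations

lemma tendsto_log_div_of_le_of_le {θ c C : ℝ} (hθ : 0 < θ) (hc : 0 < c) {x : ℕ → ℝ}
    (hlow : ∀ n : ℕ, c * θ ^ n / (n + 1) ≤ x n) (hup : ∀ n : ℕ, x n ≤ C * θ ^ n) :
    Tendsto (fun n : ℕ => Real.log (x n) / n) atTop (nhds (Real.log θ)) := by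
  have hlow_pos (n : ℕ) : 0 < c * θ ^ n / (n + 1) := by positivity
  have hC : 0 < C := by simpa using (hlow_pos 0).trans_le ((hlow 0).trans (hup 0))
  have hlog : Tendsto (fun n : ℕ => Real.log (n + 1) / n) atTop (nhds 0) := by
    have := (Real.tendsto_pow_log_div_mul_add_atTop 1 (-1) 1 one_ne_zero).comp
      (tendsto_atTop_add_const_right _ 1 tendsto_natCast_atTop_atTop)
    simpa [Function.comp_def] using this
  have hlower : Tendsto (fun n : ℕ => Real.log θ + Real.log c / n - Real.log (n + 1) / n) atTop
      (nhds (Real.log θ)) := by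
    simpa using (tendsto_const_nhds.add (tendsto_const_div_atTop_nhds_zero_nat _)).sub hlog
  have hupper : Tendsto (fun n : ℕ => Real.log θ + Real.log C / n) atTop (nhds (Real.log θ)) := by
    simpa using (tendsto_const_nhds (x := Real.log θ)).add
      (tendsto_const_div_atTop_nhds_zero_nat (Real.log C))
  refine tendsto_of_tendsto_of_tendsto_of_le_of_le' hlower hupper ?_ ?_ <;>
    filter_upwards [eventually_gt_atTop 0] with n hn
  · calc Real.log θ + Real.log c / n - Real.log (n + 1) / n
        = Real.log (c * θ ^ n / (n + 1)) / n := by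
          rw [Real.log_div (by positivity) (by positivity), Real.log_mul hc.ne' (by positivity),
            Real.log_pow]
          field_simp
          ring
      _ ≤ Real.log (x n) / n := by
          gcongr
          exact hlow n
  · calc Real.log (x n) / n ≤ Real.log (C * θ ^ n) / n := by
          gcongr
          exacts [(hlow_pos n).trans_le (hlow n), hup n]
      _ = Real.log θ + Real.log C / n := by
          rw [Real.log_mul hC.ne' (by positivity), Real.log_pow]
          field_simp
          ring

/-- For `p ∈ (0,1/2)` and `δ ∈ [0,1/2]`,
`lim_{n→∞} (1/n) log P(M_n ≤ n(1−δ), B > n) = −D(1/2‖p)`, where `B` is the time of the last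
visit of the walk to `0` (so `B > n` iff `∃ m > n, X_m = 0`). -/
theorem stmt2
    (μ : Measure Ω) [IsProbabilityMeasure μ]
    (p : ℝ) (hp : p ∈ Set.Ioo (0:ℝ) (1/2))
    (Y : ℕ → Ω → ℤ)
    (hmeas : ∀ i, Measurable (Y i))
    (hrange : ∀ i ω, Y i ω = 1 ∨ Y i ω = -1)
    (hdist : ∀ i, μ {ω | Y i ω = 1} = ENNReal.ofReal (1 - p))
    (hindep : iIndepFun Y μ)
    (δ : ℝ) (hδ : δ ∈ Set.Icc (0:ℝ) (1/2)) :
    Tendsto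
      (fun n : ℕ =>
        Real.log ((μ {ω | (Mcount Y n ω : ℝ) ≤ (n : ℝ) * (1 - δ) ∧
            ∃ m, n < m ∧ walk Y m ω = 0}).toReal) / (n : ℝ))
      atTop (nhds (-(Dhalf p))) := by
  obtain ⟨hp0, hp2⟩ := hp
  have hp1 : p ≤ 1 := by linarith
  have hθ0 : 0 < decayRate p := decayRate_pos hp0 (by linarith)
  have hθ1 : decayRate p < 1 := decayRate_lt_one hp2.ne
  rw [← log_decayRate hp0 (by linarith)]
  refine tendsto_log_div_of_le_of_le hθ0 (c := decayRate p ^ 2 / 6)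
    (C := decayRate p / (1 - decayRate p)) (by positivity) (fun n => ?_) (fun n => ?_)
  · refine (ENNReal.ofReal_le_iff_le_toReal (measure_ne_top _ _)).1
      ((le_measure_two_mul_Mcount_le_and_exists_walk_eq_zero hp0.le hp1 hmeas hrange hdist hindep
        n).trans (measure_mono ?_))
    rintro ω ⟨hM, hreturn⟩
    have hM' : 2 * (Mcount Y n ω : ℝ) ≤ n := by exact_mod_cast hM
    exact ⟨by nlinarith [hδ.2], hreturn⟩
  · have hbound := measure_exists_walk_eq_zero_le hp0.le hp1 hθ1 hmeas hrange hdist hindep n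
    rw [pow_succ', mul_div_right_comm] at hbound
    exact ENNReal.toReal_le_of_le_ofReal (by positivity)
      ((measure_mono fun ω hω => hω.2).trans hbound)
end
end

section
/- Let p ∈ (0,1/2) and δ ∈ [0,1]. Then liminf_{n→∞} (1/n) log P(M_n ≤ n(1−δ)) ≥ −δ·D(1/2‖p). -/
open MeasureTheory ProbabilityTheory Filter

noncomputable section

variable {Ω : Type*} [MeasurableSpace Ω]

/-! The event `M_n ≤ n(1-δ)` contains the event that the walk stays strictly negative during its
first `2k+1` steps, `k = ⌈δn/2⌉`, since then `X̂_i = -1` for `1 ≤ i ≤ 2k+1`. Reflecting a Dyck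
word of semilength `k` and prefixing a down-step gives such a trajectory, with `k` up-steps and
`k+1` down-steps, so by counting Dyck words this event has probability at least
`C_k (1-p)^k p^(k+1) ≥ (4p(1-p))^k p / ((2k+1)(k+1))`. As `log (4p(1-p)) = -2 D(1/2‖p)`,
`(1/n) log P(M_n ≤ n(1-δ)) ≥ -δ D(1/2‖p) - O(log n / n)`. -/

open Finset Function
open scoped ENNReal Topology

section DyckPaths

open DyckStep

def negStep : DyckStep → ℤ
  | U => -1
  | D => 1

lemma negStep_injective : Injective negStep := by
  intro a b h
  cases a <;> cases b <;> simp_all [negStep]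

lemma sum_map_negStep (l : List DyckStep) :
    (l.map negStep).sum = (l.count D : ℤ) - l.count U := by
  induction l with
  | nil => simp
  | cons a t ih => cases a <;> simp [negStep, ih] <;> ring

def negExcursion (w : DyckWord) : List ℤ := -1 :: w.toList.map negStep

lemma negExcursion_injective : Injective negExcursion := by
  intro v w h
  simp only [negExcursion, List.cons.injEq, true_and] at h
  exact DyckWord.ext (List.map_injective_iff.mpr negStep_injective h)

lemma length_negExcursion (w : DyckWord) :
    (negExcursion w).length = 2 * w.semilength + 1 := by
  simp [negExcursion, DyckWord.two_mul_semilength_eq_length]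

lemma count_one_negExcursion (w : DyckWord) : (negExcursion w).count 1 = w.semilength := by
  have h := List.count_map_of_injective w.toList negStep negStep_injective D
  simp only [negStep] at h
  simp [negExcursion, h, DyckWord.semilength_eq_count_D]

lemma count_neg_one_negExcursion (w : DyckWord) :
    (negExcursion w).count (-1) = w.semilength + 1 := by
  have h := List.count_map_of_injective w.toList negStep negStep_injective U
  simp only [negStep] at h
  simp [negExcursion, h, DyckWord.semilength]

lemma eq_one_or_eq_neg_one_of_mem_negExcursion {w : DyckWord} {x : ℤ}
    (hx : x ∈ negExcursion w) : x = 1 ∨ x = -1 := by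
  simp only [negExcursion, List.mem_cons, List.mem_map] at hx
  rcases hx with rfl | ⟨s, -, rfl⟩
  · exact Or.inr rfl
  · cases s <;> simp [negStep]

lemma sum_take_negExcursion_neg (w : DyckWord) {i : ℕ} (hi : 1 ≤ i) :
    ((negExcursion w).take i).sum < 0 := by
  obtain ⟨j, rfl⟩ := Nat.exists_eq_add_of_le' hi
  simp only [negExcursion, List.take_succ_cons, List.sum_cons, ← List.map_take, sum_map_negStep]
  have := w.count_D_le_count_U j
  omega

end DyckPaths

lemma four_pow_le_catalan (k : ℕ) : 4 ^ k ≤ (2 * k + 1) * (k + 1) * catalan k :=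
  calc 4 ^ k ≤ (2 * k + 1) * (2 * k).choose k :=
        Nat.four_pow_le_two_mul_add_one_mul_central_binom k
    _ = (2 * k + 1) * (k + 1) * catalan k := by
      rw [mul_assoc, succ_mul_catalan_eq_centralBinom, Nat.centralBinom_eq_two_mul_choose]

lemma prod_range_length_getD {α M : Type*} [CommMonoid M] (f : α → M) (l : List α) (d : α) :
    ∏ i ∈ range l.length, f (l.getD i d) = (l.map f).prod := by
  induction l with
  | nil => simp
  | cons a t ih =>
    simp only [List.length_cons, prod_range_succ', List.getD_cons_succ, List.getD_cons_zero, ih,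
      List.map_cons, List.prod_cons, mul_comm]

lemma prod_map_eq_pow_count_one_mul {M : Type*} [CommMonoid M] (f : ℤ → M) (l : List ℤ)
    (hl : ∀ x ∈ l, x = 1 ∨ x = -1) :
    (l.map f).prod = f 1 ^ l.count 1 * f (-1) ^ l.count (-1) := by
  induction l with
  | nil => simp
  | cons a t ih =>
    rw [List.map_cons, List.prod_cons, ih fun x hx => hl x (List.mem_cons_of_mem a hx)]
    rcases hl a List.mem_cons_self with rfl | rfl <;> simp [pow_succ] <;> ac_rfl

section PathCylinder

variable {Ω : Type*} {Y : ℕ → Ω → ℤ}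

def pathCylinder (Y : ℕ → Ω → ℤ) (l : List ℤ) : Set Ω :=
  ⋂ i ∈ range l.length, Y i ⁻¹' {l.getD i 0}

lemma mem_pathCylinder {l : List ℤ} {ω : Ω} :
    ω ∈ pathCylinder Y l ↔ ∀ i < l.length, Y i ω = l.getD i 0 := by
  simp [pathCylinder]

lemma disjoint_pathCylinder {l₁ l₂ : List ℤ} (hlen : l₁.length = l₂.length) (hne : l₁ ≠ l₂) :
    Disjoint (pathCylinder Y l₁) (pathCylinder Y l₂) := by
  refine Set.disjoint_left.mpr fun ω h₁ h₂ => hne (List.ext_getElem hlen fun i hi₁ hi₂ => ?_)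
  rw [← List.getD_eq_getElem l₁ 0 hi₁, ← List.getD_eq_getElem l₂ 0 hi₂,
    ← mem_pathCylinder.mp h₁ i hi₁, ← mem_pathCylinder.mp h₂ i hi₂]

lemma walk_eq_sum_take_of_mem_pathCylinder {l : List ℤ} {ω : Ω} (hω : ω ∈ pathCylinder Y l)
    {i : ℕ} (hi : i ≤ l.length) : walk Y i ω = (l.take i).sum := by
  induction i with
  | zero => simp [walk]
  | succ i ih =>
    have hi' : i < l.length := hi
    rw [walk, sum_range_succ, ← walk, ih hi'.le, mem_pathCylinder.mp hω i hi',
      List.getD_eq_getElem l 0 hi', ← List.take_concat_get' l i hi', List.sum_append]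
    simp

end PathCylinder

section SignProcess

variable {Ω : Type*} {Y : ℕ → Ω → ℤ} {ω : Ω}

lemma sgnProc_eq_neg_one_of_walk_neg {i : ℕ} (hi : 1 ≤ i) (h : walk Y i ω < 0) :
    sgnProc Y i ω = -1 := by
  obtain ⟨j, rfl⟩ := Nat.exists_eq_add_of_le' hi
  simp [sgnProc, h, h.le.not_gt]

lemma Mcount_le_sub_of_walk_neg {n m : ℕ} (h : ∀ i ∈ Icc 1 m, walk Y i ω < 0) :
    Mcount Y n ω ≤ n - m := by
  have hsub : (Icc 1 n).filter (fun i => sgnProc Y i ω = 1) ⊆ Icc (m + 1) n := by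
    intro i hi
    simp only [mem_filter, mem_Icc] at hi ⊢
    refine ⟨?_, hi.1.2⟩
    by_contra hle
    have := sgnProc_eq_neg_one_of_walk_neg hi.1.1 (h i (mem_Icc.mpr ⟨hi.1.1, by omega⟩))
    omega
  calc Mcount Y n ω ≤ (Icc (m + 1) n).card := card_le_card hsub
    _ = n - m := by rw [Nat.card_Icc]; omega

lemma setOf_walk_neg_subset_Mcount_le {n m : ℕ} {δ : ℝ} (hδ : δ ≤ 1) (hm : δ * n ≤ m) :
    {ω | ∀ i ∈ Icc 1 m, walk Y i ω < 0} ⊆ {ω | (Mcount Y n ω : ℝ) ≤ n * (1 - δ)} := by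
  intro ω hω
  have hM := Mcount_le_sub_of_walk_neg (n := n) hω
  rcases le_or_gt m n with h | h
  · have : (Mcount Y n ω : ℝ) + m ≤ n := by exact_mod_cast (by omega)
    simp only [Set.mem_ofPred_eq]
    linarith
  · have : Mcount Y n ω = 0 := by omega
    simp only [Set.mem_ofPred_eq, this, Nat.cast_zero]
    nlinarith

end SignProcess

section LowerBound

variable {Y : ℕ → Ω → ℤ} {μ : Measure Ω} [IsProbabilityMeasure μ] {p : ℝ}

lemma measurableSet_pathCylinder (hmeas : ∀ i, Measurable (Y i)) (l : List ℤ) :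
    MeasurableSet (pathCylinder Y l) :=
  measurableSet_biInter _ fun i _ => hmeas i (measurableSet_singleton _)

lemma measure_preimage_eq_neg_one (hp1 : p ≤ 1) (hmeas : ∀ i, Measurable (Y i))
    (hrange : ∀ i ω, Y i ω = 1 ∨ Y i ω = -1)
    (hdist : ∀ i, μ {ω | Y i ω = 1} = ENNReal.ofReal (1 - p)) (i : ℕ) :
    μ (Y i ⁻¹' {-1}) = ENNReal.ofReal p := by
  have hcompl : Y i ⁻¹' {-1} = {ω | Y i ω = 1}ᶜ := by
    ext ω
    rcases hrange i ω with h | h <;> simp [h]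
  rw [hcompl, prob_compl_eq_one_sub (measurableSet_eq_fun (hmeas i) measurable_const), hdist,
    ← ENNReal.ofReal_one, ← ENNReal.ofReal_sub _ (by linarith)]
  ring_nf

lemma measure_pathCylinder (hp1 : p ≤ 1) (hmeas : ∀ i, Measurable (Y i))
    (hrange : ∀ i ω, Y i ω = 1 ∨ Y i ω = -1)
    (hdist : ∀ i, μ {ω | Y i ω = 1} = ENNReal.ofReal (1 - p)) (hindep : iIndepFun Y μ)
    {l : List ℤ} (hl : ∀ x ∈ l, x = 1 ∨ x = -1) :
    μ (pathCylinder Y l) =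
      ENNReal.ofReal (1 - p) ^ l.count 1 * ENNReal.ofReal p ^ l.count (-1) := by
  let f : ℤ → ℝ≥0∞ := fun c => if c = 1 then ENNReal.ofReal (1 - p) else ENNReal.ofReal p
  have hfactor : ∀ i ∈ range l.length, μ (Y i ⁻¹' {l.getD i 0}) = f (l.getD i 0) := by
    intro i hi
    have hi' := mem_range.mp hi
    rw [List.getD_eq_getElem l 0 hi']
    rcases hl _ (List.getElem_mem hi') with h | h <;> rw [h]
    · exact hdist i
    · exact measure_preimage_eq_neg_one hp1 hmeas hrange hdist i
  rw [pathCylinder, hindep.measure_inter_preimage_eq_mul _ fun i _ => measurableSet_singleton _,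
    prod_congr rfl hfactor, prod_range_length_getD, prod_map_eq_pow_count_one_mul f l hl]
  simp [f]

lemma catalan_mul_le_measure_walk_neg (hp1 : p ≤ 1) (hmeas : ∀ i, Measurable (Y i))
    (hrange : ∀ i ω, Y i ω = 1 ∨ Y i ω = -1)
    (hdist : ∀ i, μ {ω | Y i ω = 1} = ENNReal.ofReal (1 - p)) (hindep : iIndepFun Y μ) (k : ℕ) :
    (catalan k : ℝ≥0∞) * (ENNReal.ofReal (1 - p) ^ k * ENNReal.ofReal p ^ (k + 1)) ≤
      μ {ω | ∀ i ∈ Icc 1 (2 * k + 1), walk Y i ω < 0} := by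
  let C : {w : DyckWord // w.semilength = k} → Set Ω := fun w => pathCylinder Y (negExcursion w)
  have hlength (w : {w : DyckWord // w.semilength = k}) :
      (negExcursion w.1).length = 2 * k + 1 := by
    rw [length_negExcursion, w.2]
  have hsub : (⋃ w, C w) ⊆ {ω | ∀ i ∈ Icc 1 (2 * k + 1), walk Y i ω < 0} := by
    refine Set.iUnion_subset fun w ω hω i hi => ?_
    obtain ⟨hi1, hi2⟩ := mem_Icc.mp hi
    rw [walk_eq_sum_take_of_mem_pathCylinder hω (by rw [hlength]; exact hi2)]
    exact sum_take_negExcursion_neg w hi1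
  have hdisj : Pairwise (Disjoint on C) := fun v w hvw =>
    disjoint_pathCylinder (by rw [hlength, hlength])
      (negExcursion_injective.ne (Subtype.coe_injective.ne hvw))
  have hC (w : {w : DyckWord // w.semilength = k}) :
      μ (C w) = ENNReal.ofReal (1 - p) ^ k * ENNReal.ofReal p ^ (k + 1) := by
    rw [measure_pathCylinder hp1 hmeas hrange hdist hindep
      fun x hx => eq_one_or_eq_neg_one_of_mem_negExcursion hx,
      count_one_negExcursion, count_neg_one_negExcursion, w.2]
  calc (catalan k : ℝ≥0∞) * (ENNReal.ofReal (1 - p) ^ k * ENNReal.ofReal p ^ (k + 1))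
      = ∑' w, μ (C w) := by
        simp only [hC, tsum_fintype, sum_const, card_univ,
          DyckWord.card_dyckWord_semilength_eq_catalan, nsmul_eq_mul]
    _ = μ (⋃ w, C w) := (measure_iUnion hdisj fun w => measurableSet_pathCylinder hmeas _).symm
    _ ≤ _ := measure_mono hsub

lemma pow_mul_le_measureReal_walk_neg (hp0 : 0 ≤ p) (hp1 : p ≤ 1)
    (hmeas : ∀ i, Measurable (Y i)) (hrange : ∀ i ω, Y i ω = 1 ∨ Y i ω = -1)
    (hdist : ∀ i, μ {ω | Y i ω = 1} = ENNReal.ofReal (1 - p)) (hindep : iIndepFun Y μ) (k : ℕ) :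
    (4 * p * (1 - p)) ^ k * p ≤
      (2 * k + 1) * (k + 1) * μ.real {ω | ∀ i ∈ Icc 1 (2 * k + 1), walk Y i ω < 0} := by
  have hcatalan : (4 : ℝ) ^ k ≤ (2 * k + 1) * (k + 1) * catalan k := by
    exact_mod_cast four_pow_le_catalan k
  have hmeasure := ENNReal.toReal_mono (measure_ne_top μ _)
    (catalan_mul_le_measure_walk_neg hp1 hmeas hrange hdist hindep k)
  rw [ENNReal.toReal_mul, ENNReal.toReal_mul, ENNReal.toReal_pow, ENNReal.toReal_pow,
    ENNReal.toReal_ofReal (by linarith), ENNReal.toReal_ofReal hp0, ENNReal.toReal_natCast]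
    at hmeasure
  calc (4 * p * (1 - p)) ^ k * p = 4 ^ k * ((1 - p) ^ k * p ^ (k + 1)) := by
        rw [mul_pow, mul_pow, pow_succ]
        ring
    _ ≤ (2 * k + 1) * (k + 1) * catalan k * ((1 - p) ^ k * p ^ (k + 1)) := by gcongr
    _ ≤ (2 * k + 1) * (k + 1) * μ.real {ω | ∀ i ∈ Icc 1 (2 * k + 1), walk Y i ω < 0} := by
      rw [mul_assoc]
      exact mul_le_mul_of_nonneg_left hmeasure (by positivity)

lemma log_measureReal_Mcount_le_ge (hp : p ∈ Set.Ioo 0 1) (hmeas : ∀ i, Measurable (Y i))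
    (hrange : ∀ i ω, Y i ω = 1 ∨ Y i ω = -1)
    (hdist : ∀ i, μ {ω | Y i ω = 1} = ENNReal.ofReal (1 - p)) (hindep : iIndepFun Y μ)
    {δ : ℝ} (hδ : δ ∈ Set.Icc 0 1) (n : ℕ) :
    δ / 2 * Real.log (4 * p * (1 - p)) * n + Real.log (4 * p * (1 - p) * p)
        - 2 * Real.log (n + 3) ≤
      Real.log (μ.real {ω | (Mcount Y n ω : ℝ) ≤ n * (1 - δ)}) := by
  obtain ⟨hp0, hp1⟩ := hp
  obtain ⟨hδ0, hδ1⟩ := hδ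
  set r := 4 * p * (1 - p)
  have hr0 : 0 < r := by positivity
  have hlogr : Real.log r ≤ 0 := Real.log_nonpos hr0.le (by nlinarith [sq_nonneg (2 * p - 1)])
  set k := ⌈δ * n / 2⌉₊
  have hk : δ * n / 2 ≤ k := Nat.le_ceil _
  have hk' : (k : ℝ) < δ * n / 2 + 1 := Nat.ceil_lt_add_one (by positivity)
  have hsub := setOf_walk_neg_subset_Mcount_le (Y := Y) (n := n) (m := 2 * k + 1) hδ1
    (by push_cast; linarith)
  have hbound : r ^ k * p ≤ ((n : ℝ) + 3) ^ 2 * μ.real {ω | (Mcount Y n ω : ℝ) ≤ n * (1 - δ)} :=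
    calc r ^ k * p
        ≤ (2 * k + 1) * (k + 1) * μ.real {ω | ∀ i ∈ Icc 1 (2 * k + 1), walk Y i ω < 0} :=
          pow_mul_le_measureReal_walk_neg hp0.le hp1.le hmeas hrange hdist hindep k
      _ ≤ ((n : ℝ) + 3) ^ 2 * μ.real {ω | (Mcount Y n ω : ℝ) ≤ n * (1 - δ)} := by
          have h₁ : (2 * k + 1 : ℝ) ≤ n + 3 := by nlinarith
          have h₂ : (k + 1 : ℝ) ≤ n + 3 := by nlinarith
          rw [sq]
          gcongr
          exact measure_ne_top μ _
  have hpos : 0 < μ.real {ω | (Mcount Y n ω : ℝ) ≤ n * (1 - δ)} :=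
    pos_of_mul_pos_right ((by positivity : 0 < r ^ k * p).trans_le hbound) (by positivity)
  have hlog := Real.log_le_log (by positivity) hbound
  rw [Real.log_mul (by positivity) hp0.ne', Real.log_pow, Real.log_mul (by positivity) hpos.ne',
    Real.log_pow] at hlog
  rw [Real.log_mul hr0.ne' hp0.ne']
  have : (δ * n / 2 + 1) * Real.log r ≤ k * Real.log r :=
    mul_le_mul_of_nonpos_right hk'.le hlogr
  push_cast at hlog
  linarith

end LowerBound

lemma tendsto_mul_add_sub_log_div (a b c d : ℝ) :
    Tendsto (fun n : ℕ => (a * n + b - c * Real.log (n + d)) / n) atTop (𝓝 a) := by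
  have hlog : Tendsto (fun n : ℕ => Real.log (n + d) / n) atTop (𝓝 0) := by
    have h := (Real.tendsto_pow_log_div_mul_add_atTop 1 (-d) 1 one_ne_zero).comp
      (tendsto_atTop_add_const_right atTop d tendsto_natCast_atTop_atTop)
    refine h.congr fun n => ?_
    simp
  have hlim := ((tendsto_const_div_atTop_nhds_zero_nat b).sub (hlog.const_mul c)).const_add a
  rw [mul_zero, sub_zero, add_zero] at hlim
  refine hlim.congr' ((eventually_ne_atTop 0).mono fun n hn => ?_)
  field_simp
  ring

lemma Dhalf_eq {p : ℝ} (hp0 : 0 < p) (hp1 : p < 1) :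
    Dhalf p = -Real.log (4 * p * (1 - p)) / 2 := by
  have hprod : 1 / 2 / p * (1 / 2 / (1 - p)) = (4 * p * (1 - p))⁻¹ := by
    field_simp [sub_ne_zero.mpr hp1.ne']
    ring
  rw [Dhalf, ← mul_add, ← Real.log_mul (by positivity) (div_pos one_half_pos (by linarith)).ne',
    hprod, Real.log_inv]
  ring

/-- For `p ∈ (0,1/2)` and `δ ∈ [0,1]`,
`liminf_{n→∞} (1/n) log P(M_n ≤ n(1−δ)) ≥ −δ·D(1/2‖p)`. -/
theorem stmt3
    (μ : Measure Ω) [IsProbabilityMeasure μ]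
    (p : ℝ) (hp : p ∈ Set.Ioo (0:ℝ) (1/2))
    (Y : ℕ → Ω → ℤ)
    (hmeas : ∀ i, Measurable (Y i))
    (hrange : ∀ i ω, Y i ω = 1 ∨ Y i ω = -1)
    (hdist : ∀ i, μ {ω | Y i ω = 1} = ENNReal.ofReal (1 - p))
    (hindep : iIndepFun Y μ)
    (δ : ℝ) (hδ : δ ∈ Set.Icc (0:ℝ) 1) :
    -(δ * Dhalf p) ≤
      Filter.liminf
        (fun n : ℕ =>
          Real.log ((μ {ω | (Mcount Y n ω : ℝ) ≤ (n : ℝ) * (1 - δ)}).toReal) / (n : ℝ))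
        atTop := by
  have hp1 : p < 1 := by linarith [hp.2]
  set r := 4 * p * (1 - p)
  have hrate := tendsto_mul_add_sub_log_div (δ / 2 * Real.log r) (Real.log (r * p)) 2 3
  have hlower (n : ℕ) :
      (δ / 2 * Real.log r * n + Real.log (r * p) - 2 * Real.log (n + 3)) / n ≤
        Real.log ((μ {ω | (Mcount Y n ω : ℝ) ≤ (n : ℝ) * (1 - δ)}).toReal) / n :=
    div_le_div_of_nonneg_right
      (log_measureReal_Mcount_le_ge ⟨hp.1, hp1⟩ hmeas hrange hdist hindep hδ n) n.cast_nonneg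
  have hnonpos (n : ℕ) :
      Real.log ((μ {ω | (Mcount Y n ω : ℝ) ≤ (n : ℝ) * (1 - δ)}).toReal) / n ≤ 0 :=
    div_nonpos_of_nonpos_of_nonneg
      (Real.log_nonpos measureReal_nonneg measureReal_le_one) n.cast_nonneg
  calc -(δ * Dhalf p) = δ / 2 * Real.log r := by rw [Dhalf_eq hp.1 hp1]; ring
    _ = liminf _ atTop := hrate.liminf_eq.symm
    _ ≤ _ := liminf_le_liminf (.of_forall hlower) hrate.isBoundedUnder_ge
        (isBoundedUnder_of ⟨0, hnonpos⟩).isCoboundedUnder_ge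
end
end

section
/- Let p, q ∈ (0,1/2) and δ ∈ [q, 1−q]. Then inf_{θ∈[0,1]} { θ·D(1/2‖p) + inf_{w∈[0,1−δ]} I_θ(w) } = inf_{θ∈[0,(δ−q)/((1−q)−q)]} { θ·D(1/2‖p) + I_θ(1−δ) }. -/
noncomputable section

/-- `τ(q,θ,w) = ((1−q)/q)((1−θ)−w) + (q/(1−q))(θ−w)`. -/
def tauF (q θ w : ℝ) : ℝ := (1-q)/q * ((1-θ) - w) + q/(1-q) * (θ - w)

/-- `η(q,θ,w) = (−τ + √(τ² + 4w(1−w)))/(2(1−w))`. -/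
def etaF (q θ w : ℝ) : ℝ :=
  (-(tauF q θ w) + Real.sqrt ((tauF q θ w)^2 + 4*w*(1-w))) / (2*(1-w))

/-- The rate function `I_θ(w) = w log η − (1−θ) log((1−q)η + q) − θ log(qη + (1−q))`. -/
def rateI (q θ w : ℝ) : ℝ :=
  w * Real.log (etaF q θ w) - (1-θ) * Real.log ((1-q) * etaF q θ w + q)
    - θ * Real.log (q * etaF q θ w + (1-q))

/-!
`I_θ(w)` is the value at `x = η` of `J_w(x) = w log x − (1−θ) log((1−q)x+q) − θ log(qx+(1−q))`,
and the quadratic defining `η` is exactly the critical-point equation of `J_w`; concavity of `log`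
then shows that `η` maximizes `J_w` over `x > 0`. Hence `I_θ ≥ J_w(1) = 0`, and `I_θ` vanishes at
the mean `m_θ = (1−θ)(1−q) + θq`, where `η = 1`. For `w ≤ w' ≤ m_θ` one has `η(w') ≤ 1`, so
`I_θ(w) ≥ J_w(η(w')) = I_θ(w') + (w − w') log η(w') ≥ I_θ(w')`: the inner infimum is `I_θ(1−δ)`
as long as `1−δ ≤ m_θ`, i.e. `θ ≤ θ₀ = (δ−q)/(1−2q)`. For `θ > θ₀` the objective is at least
`θ₀ D(1/2‖p) = θ₀ D(1/2‖p) + I_{θ₀}(1−δ)`, because `D(1/2‖p) ≥ 0`.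
-/

open Real Set

theorem Real.mul_log_le_log_add_one_sub {a t : ℝ} (ha0 : 0 ≤ a) (ha1 : a ≤ 1) (ht : 0 < t) :
    a * log t ≤ log (a * t + (1 - a)) := by
  have h := strictConcaveOn_log_Ioi.concaveOn.2 (mem_Ioi.2 ht) (mem_Ioi.2 one_pos)
    ha0 (sub_nonneg.2 ha1) (add_sub_cancel a 1)
  simpa using h

theorem mul_log_sub_log_le_log_affine_sub {c d x y : ℝ} (hc : 0 < c) (hd : 0 < d)
    (hx : 0 < x) (hy : 0 < y) :
    c * y / (c * y + d) * (log x - log y) ≤ log (c * x + d) - log (c * y + d) := by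
  have hcy : 0 < c * y + d := by positivity
  have ha1 : c * y / (c * y + d) ≤ 1 := (div_le_one hcy).2 (by linarith)
  have h := Real.mul_log_le_log_add_one_sub (by positivity) ha1 (div_pos hx hy)
  have hsum : c * y / (c * y + d) * (x / y) + (1 - c * y / (c * y + d))
      = (c * x + d) / (c * y + d) := by
    field_simp; ring
  rwa [hsum, log_div hx.ne' hy.ne', log_div (by positivity) hcy.ne'] at h

theorem csInf_image_Icc_eq_of_le_right {α β : Type*} [LinearOrder α]
    [ConditionallyCompleteLinearOrder β] {f : α → β} {a b c : α} (hab : a ≤ b) (hbc : b ≤ c)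
    (hf : ∀ x ∈ Icc b c, f b ≤ f x) (hbdd : BddBelow (f '' Icc a c)) :
    sInf (f '' Icc a c) = sInf (f '' Icc a b) := by
  have hsub : Icc a b ⊆ Icc a c := Icc_subset_Icc_right hbc
  have hbdd' : BddBelow (f '' Icc a b) := hbdd.mono (image_mono hsub)
  refine le_antisymm (csInf_le_csInf hbdd ((nonempty_Icc.2 hab).image f) (image_mono hsub)) ?_
  refine le_csInf ((nonempty_Icc.2 (hab.trans hbc)).image f) ?_
  rintro _ ⟨x, ⟨hax, hxc⟩, rfl⟩
  rcases le_total x b with hxb | hbx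
  · exact csInf_le hbdd' ⟨x, ⟨hax, hxb⟩, rfl⟩
  · exact (csInf_le hbdd' ⟨b, ⟨hab, le_rfl⟩, rfl⟩).trans (hf x ⟨hbx, hxc⟩)

theorem Dhalf_nonneg {p : ℝ} (hp0 : 0 < p) (hp1 : p < 1) : 0 ≤ Dhalf p := by
  have hprod : 1 ≤ 1 / 2 / p * (1 / 2 / (1 - p)) := by
    rw [div_mul_div_comm, le_div_iff₀ (by nlinarith)]
    nlinarith [sq_nonneg (2 * p - 1)]
  have h := log_nonneg hprod
  rw [log_mul (by positivity) (div_pos (by norm_num) (by linarith)).ne'] at h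
  unfold Dhalf
  linarith

-- `J_w(x)`; `I_θ(w) = sup_{x > 0} J_w(x)`, attained at `x = η` (`tiltedObj_le_rateI`).
def tiltedObj (q θ w x : ℝ) : ℝ :=
  w * log x - (1 - θ) * log ((1 - q) * x + q) - θ * log (q * x + (1 - q))

section RateFunction

variable {q θ w : ℝ}

theorem rateI_eq_tiltedObj : rateI q θ w = tiltedObj q θ w (etaF q θ w) := rfl

theorem tiltedObj_le_of_critical {x η : ℝ} (hq0 : 0 < q) (hq1 : q < 1) (hθ0 : 0 ≤ θ)
    (hθ1 : θ ≤ 1) (hx : 0 < x) (hη : 0 < η)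
    (hcrit : w = (1 - θ) * ((1 - q) * η / ((1 - q) * η + q)) + θ * (q * η / (q * η + (1 - q)))) :
    tiltedObj q θ w x ≤ tiltedObj q θ w η := by
  have h₁ := mul_le_mul_of_nonneg_left
    (mul_log_sub_log_le_log_affine_sub (sub_pos.2 hq1) hq0 hx hη) (sub_nonneg.2 hθ1)
  have h₂ := mul_le_mul_of_nonneg_left
    (mul_log_sub_log_le_log_affine_sub hq0 (sub_pos.2 hq1) hx hη) hθ0
  unfold tiltedObj
  subst hcrit
  linarith

theorem one_sub_two_mul_add_tauF (q θ w : ℝ) (hq0 : 0 < q) (hq1 : q < 1) :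
    1 - 2 * w + tauF q θ w
      = ((1 - θ) * (1 - q) + θ * q - w) * (2 + (1 - q) / q + q / (1 - q)) := by
  have : 1 - q ≠ 0 := by linarith
  unfold tauF
  field_simp
  ring

theorem etaF_pos (hw0 : 0 < w) (hw1 : w < 1) : 0 < etaF q θ w := by
  have h : |tauF q θ w| < √(tauF q θ w ^ 2 + 4 * w * (1 - w)) := by
    rw [← sqrt_sq_eq_abs]
    exact sqrt_lt_sqrt (sq_nonneg _) (by nlinarith)
  exact div_pos (by linarith [le_abs_self (tauF q θ w)]) (by linarith)

theorem etaF_quadratic_eq_zero (hw0 : 0 ≤ w) (hw1 : w < 1) :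
    (1 - w) * etaF q θ w ^ 2 + tauF q θ w * etaF q θ w - w = 0 := by
  have hs := sq_sqrt (by nlinarith : 0 ≤ tauF q θ w ^ 2 + 4 * w * (1 - w))
  have : 1 - w ≠ 0 := by linarith
  rw [etaF]
  generalize √(tauF q θ w ^ 2 + 4 * w * (1 - w)) = s at hs ⊢
  field_simp
  linear_combination hs

theorem etaF_critical (hq0 : 0 < q) (hq1 : q < 1) (hw0 : 0 < w) (hw1 : w < 1) :
    w = (1 - θ) * ((1 - q) * etaF q θ w / ((1 - q) * etaF q θ w + q))
      + θ * (q * etaF q θ w / (q * etaF q θ w + (1 - q))) := by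
  have hη := etaF_pos (q := q) (θ := θ) hw0 hw1
  have h := etaF_quadratic_eq_zero (q := q) (θ := θ) hw0.le hw1
  have hq1' : 1 - q ≠ 0 := by linarith
  have hA : (1 - q) * etaF q θ w + q ≠ 0 := by nlinarith
  have hB : q * etaF q θ w + (1 - q) ≠ 0 := by nlinarith
  rw [mul_div_assoc', mul_div_assoc', div_add_div _ _ hA hB, eq_div_iff (mul_ne_zero hA hB)]
  unfold tauF at h
  field_simp at h
  linear_combination -h

theorem etaF_zero (hq0 : 0 < q) (hq1 : q < 1) (hθ0 : 0 ≤ θ) (hθ1 : θ ≤ 1) :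
    etaF q θ 0 = 0 := by
  have hτ : 0 ≤ tauF q θ 0 := by
    unfold tauF
    have : 0 < 1 - q := by linarith
    have : 0 ≤ 1 - θ := by linarith
    positivity
  simp [etaF, sqrt_sq hτ]

theorem etaF_le_one (hw1 : w < 1) (h : 0 ≤ 1 - 2 * w + tauF q θ w) :
    etaF q θ w ≤ 1 := by
  have hs : √(tauF q θ w ^ 2 + 4 * w * (1 - w)) ≤ 2 * (1 - w) + tauF q θ w :=
    sqrt_le_iff.2 ⟨by linarith, by nlinarith⟩
  rw [etaF, div_le_one (by linarith)]
  linarith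

theorem etaF_eq_one (hw1 : w < 1) (h : 1 - 2 * w + tauF q θ w = 0) : etaF q θ w = 1 := by
  have hτ : tauF q θ w = 2 * w - 1 := by linarith
  have : 1 - w ≠ 0 := by linarith
  rw [etaF, hτ, show (2 * w - 1) ^ 2 + 4 * w * (1 - w) = 1 by ring, sqrt_one]
  field_simp
  ring

variable (hq0 : 0 < q) (hq1 : q < 1) (hθ0 : 0 ≤ θ) (hθ1 : θ ≤ 1)
include hq0 hq1 hθ0 hθ1

theorem mean_lt_one : (1 - θ) * (1 - q) + θ * q < 1 := by
  rcases hθ1.lt_or_eq with hθ1 | rfl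
  · nlinarith [mul_pos (sub_pos.2 hθ1) hq0, mul_nonneg hθ0 (sub_pos.2 hq1).le]
  · linarith

theorem tiltedObj_le_rateI {x : ℝ} (hw0 : 0 ≤ w) (hw1 : w < 1) (hx : 0 < x) :
    tiltedObj q θ w x ≤ rateI q θ w := by
  rcases hw0.eq_or_lt with rfl | hw0
  · have h₁ := log_le_log hq0 (by nlinarith : q ≤ (1 - q) * x + q)
    have h₂ := log_le_log (sub_pos.2 hq1) (by nlinarith : 1 - q ≤ q * x + (1 - q))
    have := mul_le_mul_of_nonneg_left h₁ (sub_nonneg.2 hθ1)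
    have := mul_le_mul_of_nonneg_left h₂ hθ0
    simp only [rateI, etaF_zero hq0 hq1 hθ0 hθ1, tiltedObj, mul_zero, zero_mul, zero_add]
    linarith
  · exact tiltedObj_le_of_critical hq0 hq1 hθ0 hθ1 hx (etaF_pos hw0 hw1)
      (etaF_critical hq0 hq1 hw0 hw1)

theorem rateI_nonneg (hw0 : 0 ≤ w) (hw1 : w < 1) : 0 ≤ rateI q θ w := by
  simpa [tiltedObj] using tiltedObj_le_rateI hq0 hq1 hθ0 hθ1 hw0 hw1 one_pos

theorem rateI_mean_eq_zero : rateI q θ ((1 - θ) * (1 - q) + θ * q) = 0 := by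
  have hη := etaF_eq_one (mean_lt_one hq0 hq1 hθ0 hθ1) <| by
    rw [one_sub_two_mul_add_tauF q θ _ hq0 hq1]; ring
  simp [rateI, hη]

theorem rateI_antitoneOn : AntitoneOn (rateI q θ) (Icc 0 ((1 - θ) * (1 - q) + θ * q)) := by
  rintro w ⟨hw0, -⟩ w' ⟨hw'0, hw'm⟩ hww'
  rcases hw'0.eq_or_lt with rfl | hw'0
  · rw [le_antisymm hww' hw0]
  have hw'1 : w' < 1 := hw'm.trans_lt (mean_lt_one hq0 hq1 hθ0 hθ1)
  have hη := etaF_pos (q := q) (θ := θ) hw'0 hw'1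
  have hlog : log (etaF q θ w') ≤ 0 := log_nonpos hη.le <| etaF_le_one hw'1 <| by
    rw [one_sub_two_mul_add_tauF q θ _ hq0 hq1]
    exact mul_nonneg (by linarith) (by positivity)
  have h := tiltedObj_le_rateI hq0 hq1 hθ0 hθ1 hw0 (hww'.trans_lt hw'1) hη
  have hshift : tiltedObj q θ w (etaF q θ w')
      = rateI q θ w' + (w - w') * log (etaF q θ w') := by
    rw [rateI_eq_tiltedObj, tiltedObj, tiltedObj]; ring
  nlinarith [mul_nonneg (sub_nonneg.2 hww') (neg_nonneg.2 hlog)]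

theorem sInf_rateI_image_Icc_eq (hw0 : 0 ≤ w) (hwm : w ≤ (1 - θ) * (1 - q) + θ * q) :
    sInf (rateI q θ '' Icc 0 w) = rateI q θ w :=
  ((rateI_antitoneOn hq0 hq1 hθ0 hθ1).mono (Icc_subset_Icc_right hwm)).sInf_image_Icc hw0

theorem sInf_rateI_image_Icc_nonneg (hw0 : 0 ≤ w) (hw1 : w < 1) :
    0 ≤ sInf (rateI q θ '' Icc 0 w) :=
  le_csInf ((nonempty_Icc.2 hw0).image _) <| by
    rintro _ ⟨v, hv, rfl⟩
    exact rateI_nonneg hq0 hq1 hθ0 hθ1 hv.1 (hv.2.trans_lt hw1)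

end RateFunction

/-- For `p, q ∈ (0,1/2)` and `δ ∈ [q, 1−q]`,
`inf_{θ∈[0,1]} {θ·D(1/2‖p) + inf_{w∈[0,1−δ]} I_θ(w)}
  = inf_{θ∈[0,(δ−q)/((1−q)−q)]} {θ·D(1/2‖p) + I_θ(1−δ)}`. -/
theorem stmt6 (p q δ : ℝ) (hp : p ∈ Set.Ioo (0:ℝ) (1/2)) (hq : q ∈ Set.Ioo (0:ℝ) (1/2))
    (hδ : δ ∈ Set.Icc q (1-q)) :
    sInf ((fun θ => θ * Dhalf p + sInf ((fun w => rateI q θ w) '' Set.Icc 0 (1-δ)))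
        '' Set.Icc (0:ℝ) 1)
      = sInf ((fun θ => θ * Dhalf p + rateI q θ (1-δ))
        '' Set.Icc (0:ℝ) ((δ - q)/((1-q) - q))) := by
  obtain ⟨hq0, hq2⟩ := hq
  obtain ⟨hδq, hδ1⟩ := hδ
  have hq1 : q < 1 := by linarith
  have h2q : 0 < 1 - q - q := by linarith
  set θ₀ := (δ - q) / ((1 - q) - q) with hθ₀
  have hθ₀0 : 0 ≤ θ₀ := div_nonneg (by linarith) h2q.le
  have hθ₀1 : θ₀ ≤ 1 := (div_le_one h2q).2 (by linarith)
  have hmean₀ : (1 - θ₀) * (1 - q) + θ₀ * q = 1 - δ := by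
    rw [hθ₀]; field_simp; ring
  have hinner_nonneg (θ : ℝ) (hθ : θ ∈ Icc 0 1) : 0 ≤ sInf (rateI q θ '' Icc 0 (1 - δ)) :=
    sInf_rateI_image_Icc_nonneg hq0 hq1 hθ.1 hθ.2 (by linarith) (by linarith)
  have hinner (θ : ℝ) (hθ : θ ∈ Icc 0 θ₀) :
      sInf (rateI q θ '' Icc 0 (1 - δ)) = rateI q θ (1 - δ) :=
    sInf_rateI_image_Icc_eq hq0 hq1 hθ.1 (hθ.2.trans hθ₀1) (by linarith)
      (by rw [← hmean₀]; nlinarith [hθ.2])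
  have hD := Dhalf_nonneg hp.1 (by linarith [hp.2])
  rw [← image_congr fun θ hθ => congrArg (θ * Dhalf p + ·) (hinner θ hθ)]
  refine csInf_image_Icc_eq_of_le_right hθ₀0 hθ₀1 (fun θ hθ => ?_) ⟨0, ?_⟩
  · have hzero : rateI q θ₀ (1 - δ) = 0 := by
      rw [← hmean₀]; exact rateI_mean_eq_zero hq0 hq1 hθ₀0 hθ₀1
    rw [hinner θ₀ ⟨hθ₀0, le_rfl⟩, hzero]
    nlinarith [hinner_nonneg θ ⟨hθ₀0.trans hθ.1, hθ.2⟩, hθ.1]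
  · rintro _ ⟨θ, hθ, rfl⟩
    nlinarith [hinner_nonneg θ hθ, hθ.1]
end
end

section
/- Let p, q ∈ (0,1/2). In the ε-teaching model with parameter ε ∈ (0,1), let Θ̂_n be the student's ε-majority estimate, and Err_n(ε) = P(Θ̂_n ≠ +1). Then for each fixed ε ∈ (0,1), lim_{n→∞} −(1/n) log Err_n(ε) = min( (1−ε)·D(1/2‖p), ε·D(1/2‖q) ); consequently, the learning rate optimized over ε ∈ (0,1) equals sup_{ε∈(0,1)} min( (1−ε)·D(1/2‖p), ε·D(1/2‖q) ) = D(1/2‖p)·D(1/2‖q) / ( D(1/2‖p) + D(1/2‖q) ), attained at ε = D(1/2‖p)/(D(1/2‖p)+D(1/2‖q)). -/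
open MeasureTheory ProbabilityTheory Filter

noncomputable section

variable {Ω : Type*} [MeasurableSpace Ω]

/-- The teacher's majority estimate `Θ̃` based on the observations `Y_1, …, Y_m`:
`+1` iff `#{1 ≤ j ≤ m : Y_j = +1} ≥ m/2`. -/
def thetaTilde (Y : ℕ → Ω → ℤ) (m : ℕ) (ω : Ω) : ℤ :=
  if (m : ℝ)/2 ≤ (((Finset.Icc 1 m).filter fun j => Y j ω = 1).card : ℝ) then 1 else -1

/-- The error event of the ε-teaching + ε-majority-learning strategy at horizon `n`:
for `⌈(1−ε)n⌉ ≤ i ≤ n` the teacher transmits `Θ̃` (the majority over `Y_1,…,Y_{⌊(1−ε)n⌋}`),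
the student receives `Z_i = X̂_i · N_i` and estimates `Θ̂_n = +1` iff
`#{⌈(1−ε)n⌉ ≤ i ≤ n : Z_i = +1} ≥ ⌊εn⌋/2`; the event is `Θ̂_n ≠ +1`. -/
def epsErr (Y N : ℕ → Ω → ℤ) (ε : ℝ) (n : ℕ) : Set Ω :=
  {ω | ¬ ((⌊ε * (n:ℝ)⌋₊ : ℝ)/2 ≤
      (((Finset.Icc ⌈(1-ε) * (n:ℝ)⌉₊ n).filter
        fun i => thetaTilde Y ⌊(1-ε) * (n:ℝ)⌋₊ ω * N i ω = 1).card : ℝ))}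

/-!
Put `m = ⌊(1 - ε) n⌋` and `k = ⌊ε n⌋`; the student's window has `k + 1` slots. The teacher's
majority is wrong with probability `a = ℙ(Bin(m, p) ≥ (m + 1) / 2)`, and, independently, the
student's majority fails with probability `b = ℙ(Bin(k + 1, q) ≥ (k + 3) / 2)` when the teacher is
right and `1 - b'`, `b' = ℙ(Bin(k + 1, q) ≥ k / 2)`, when it is wrong. Hence
`Err_n = (1 - a) b + a (1 - b')`, which lies between `max a b / 2` and `2 max a b` as soon as
`a, b' ≤ 1 / 2`.

A tail `ℙ(Bin(m, r) ≥ m / 2 + O(1))` decays at rate `m D(1/2 ‖ r)`: it is at most Chernoff's bound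
`2 ^ m r ^ c (1 - r) ^ (m - c)` and at least its single term at `m / 2 + 2`, whose binomial
coefficient is `2 ^ m` up to a factor `(m + 1) ^ 3`. So `Err_n` decays at rate
`min ((1 - ε) D(1/2 ‖ p)) (ε D(1/2 ‖ q))`, and the best `ε` equalizes the two terms.
-/

open Finset Topology

/-- `u n = exp (-(α + o(1)) n)`: the learning rate of the paper. -/
def HasDecayRate (u : ℕ → ℝ) (α : ℝ) : Prop :=
  Tendsto (fun n : ℕ => -Real.log (u n) / n) atTop (𝓝 α)

namespace HasDecayRate

variable {u v w : ℕ → ℝ} {α β : ℝ}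

lemma mul (hu : HasDecayRate u α) (hv : HasDecayRate v β) (hu0 : ∀ᶠ n in atTop, 0 < u n)
    (hv0 : ∀ᶠ n in atTop, 0 < v n) : HasDecayRate (fun n => u n * v n) (α + β) := by
  refine (hu.add hv).congr' ?_
  filter_upwards [hu0, hv0] with n hun hvn
  rw [Real.log_mul hun.ne' hvn.ne']
  ring

lemma of_le_of_le (hu : HasDecayRate u α) (hw : HasDecayRate w α) (hu0 : ∀ᶠ n in atTop, 0 < u n)
    (huv : ∀ᶠ n in atTop, u n ≤ v n) (hvw : ∀ᶠ n in atTop, v n ≤ w n) : HasDecayRate v α := by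
  refine tendsto_of_tendsto_of_tendsto_of_le_of_le' hw hu ?_ ?_ <;>
    filter_upwards [hu0, huv, hvw] with n hun huvn hvwn <;>
    gcongr
  exact hun.trans_le huvn

lemma max (hu : HasDecayRate u α) (hv : HasDecayRate v β) (hu0 : ∀ᶠ n in atTop, 0 < u n)
    (hv0 : ∀ᶠ n in atTop, 0 < v n) : HasDecayRate (fun n => max (u n) (v n)) (min α β) := by
  refine (hu.min hv).congr' ?_
  filter_upwards [hu0, hv0] with n hun hvn
  rw [min_div_div_right n.cast_nonneg, min_neg_neg,
    Real.strictMonoOn_log.monotoneOn.map_max hun hvn]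

lemma tendsto_zero (hu : HasDecayRate u α) (hα : 0 < α) (hu0 : ∀ᶠ n in atTop, 0 < u n) :
    Tendsto u atTop (𝓝 0) := by
  have hlog : Tendsto (fun n => Real.log (u n)) atTop atBot := by
    have hlin : Tendsto (fun n : ℕ => -(α / 2 * n)) atTop atBot :=
      tendsto_neg_atTop_atBot.comp (tendsto_natCast_atTop_atTop.const_mul_atTop (by positivity))
    refine tendsto_atBot_mono' atTop ?_ hlin
    filter_upwards [hu.eventually (eventually_ge_nhds (half_lt_self hα)), eventually_gt_atTop 0]
      with n hn hn0
    rw [le_div_iff₀ (by exact_mod_cast hn0)] at hn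
    linarith
  refine (Real.tendsto_exp_atBot.comp hlog).congr' ?_
  filter_upwards [hu0] with n hn
  exact Real.exp_log hn

end HasDecayRate

lemma hasDecayRate_const (c : ℝ) : HasDecayRate (fun _ => c) 0 :=
  tendsto_const_div_atTop_nhds_zero_nat (-Real.log c)

lemma tendsto_div_natCast_of_abs_sub_le {x y : ℕ → ℝ} {L C : ℝ}
    (hy : Tendsto (fun n : ℕ => y n / n) atTop (𝓝 L)) (hxy : ∀ n, |x n - y n| ≤ C) :
    Tendsto (fun n : ℕ => x n / n) atTop (𝓝 L) := by
  have hdiff : Tendsto (fun n : ℕ => (x n - y n) / n) atTop (𝓝 0) := by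
    refine squeeze_zero_norm (fun n => ?_) (tendsto_const_div_atTop_nhds_zero_nat C)
    rw [norm_div, Real.norm_natCast, Real.norm_eq_abs]
    gcongr
    exact hxy n
  simpa using (hy.add hdiff).congr fun n => by ring

lemma tendsto_atTop_of_tendsto_div_natCast {x : ℕ → ℝ} {a : ℝ} (ha : 0 < a)
    (hx : Tendsto (fun n : ℕ => x n / n) atTop (𝓝 a)) : Tendsto x atTop atTop := by
  refine (hx.pos_mul_atTop ha tendsto_natCast_atTop_atTop).congr' ?_
  filter_upwards [eventually_ne_atTop 0] with n hn
  field_simp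

lemma tendsto_log_add_one_div_natCast {m : ℕ → ℕ} {a : ℝ} (ha : 0 < a)
    (hm : Tendsto (fun n : ℕ => (m n : ℝ) / n) atTop (𝓝 a)) :
    Tendsto (fun n : ℕ => Real.log (m n + 1) / n) atTop (𝓝 0) := by
  have hm1 : Tendsto (fun n : ℕ => ((m n : ℝ) + 1) / n) atTop (𝓝 a) :=
    tendsto_div_natCast_of_abs_sub_le (C := 1) hm fun n => by simp
  have hlog : Tendsto (fun n : ℕ => Real.log (m n + 1) / (m n + 1)) atTop (𝓝 0) :=
    Real.isLittleO_log_id_atTop.tendsto_div_nhds_zero.comp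
      (tendsto_atTop_of_tendsto_div_natCast ha hm1)
  simpa using (hlog.mul hm1).congr fun n => by field_simp

lemma Dhalf_eq_s7 {r : ℝ} (hr0 : 0 < r) (hr1 : r < 1) :
    Dhalf r = -Real.log 2 - (Real.log r + Real.log (1 - r)) / 2 := by
  have hhalf : Real.log (1 / 2) = -Real.log 2 := by rw [one_div, Real.log_inv]
  rw [Dhalf, Real.log_div (x := 1 / 2) (by norm_num) hr0.ne',
    Real.log_div (x := 1 / 2) (by norm_num) (by linarith), hhalf]
  ring

lemma Dhalf_pos {r : ℝ} (hr0 : 0 < r) (hr : r < 1 / 2) : 0 < Dhalf r := by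
  have h4 : Real.log (4 * (r * (1 - r))) < 0 := Real.log_neg (by nlinarith) (by nlinarith)
  rw [Real.log_mul (by norm_num) (by nlinarith), Real.log_mul hr0.ne' (by linarith),
    show (4 : ℝ) = 2 ^ 2 by norm_num, Real.log_pow] at h4
  rw [Dhalf_eq_s7 hr0 (by linarith)]
  push_cast at h4
  linarith

lemma hasDecayRate_two_rpow_mul_rpow_mul_rpow {r a : ℝ} (hr0 : 0 < r) (hr1 : r < 1)
    {m c : ℕ → ℝ} (hm : Tendsto (fun n : ℕ => m n / n) atTop (𝓝 a))
    (hc : Tendsto (fun n : ℕ => c n / n) atTop (𝓝 (a / 2))) :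
    HasDecayRate (fun n => 2 ^ m n * r ^ c n * (1 - r) ^ (m n - c n)) (a * Dhalf r) := by
  have hr1' : 0 < 1 - r := by linarith
  have h := ((hm.mul_const (Real.log 2)).add (hc.mul_const (Real.log r))).add
    ((hm.sub hc).mul_const (Real.log (1 - r)))
  rw [HasDecayRate, Dhalf_eq_s7 hr0 hr1]
  convert h.neg using 2
  · rw [Real.log_mul (by positivity) (by positivity),
      Real.log_mul (by positivity) (by positivity), Real.log_rpow (by norm_num),
      Real.log_rpow hr0, Real.log_rpow hr1']
    ring
  · ring

def binomTail (m : ℕ) (r c : ℝ) : ℝ :=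
  ∑ k ∈ (range (m + 1)).filter (fun k : ℕ => c ≤ k),
    (m.choose k : ℝ) * r ^ k * (1 - r) ^ (m - k)

section binomTail

variable {m k : ℕ} {r c : ℝ}

lemma choose_mul_pow_le_binomTail (hr0 : 0 ≤ r) (hr1 : r ≤ 1) (hck : c ≤ k) (hkm : k ≤ m) :
    (m.choose k : ℝ) * r ^ k * (1 - r) ^ (m - k) ≤ binomTail m r c := by
  have : 0 ≤ 1 - r := by linarith
  exact single_le_sum (f := fun k => (m.choose k : ℝ) * r ^ k * (1 - r) ^ (m - k))
    (fun k _ => by positivity) (mem_filter.2 ⟨mem_range.2 (Nat.lt_succ_of_le hkm), hck⟩)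

lemma binomTail_pos (hr0 : 0 < r) (hr1 : r < 1) (hcm : c ≤ m) : 0 < binomTail m r c :=
  lt_of_lt_of_le (by simpa using pow_pos hr0 m)
    (choose_mul_pow_le_binomTail hr0.le hr1.le hcm le_rfl)

/-- Chernoff's bound: since `r ≤ 1 - r`, each term `r ^ k (1 - r) ^ (m - k)` with `c ≤ k` is at
most `r ^ c (1 - r) ^ (m - c)`, and the binomial coefficients sum to `2 ^ m`. -/
lemma binomTail_le (hr0 : 0 < r) (hr : r ≤ 1 / 2) :
    binomTail m r c ≤ 2 ^ (m : ℝ) * r ^ c * (1 - r) ^ ((m : ℝ) - c) := by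
  have hr1 : 0 < 1 - r := by linarith
  have hterm : ∀ k ∈ (range (m + 1)).filter (fun k : ℕ => c ≤ k),
      r ^ k * (1 - r) ^ (m - k) ≤ r ^ c * (1 - r) ^ ((m : ℝ) - c) := by
    intro k hk
    obtain ⟨hkm, hck⟩ := mem_filter.1 hk
    replace hkm : k ≤ m := Nat.lt_succ_iff.1 (mem_range.1 hkm)
    have hsplit : (m : ℝ) - c = (k - c) + ((m - k : ℕ) : ℝ) := by
      push_cast [Nat.cast_sub hkm]
      ring
    calc r ^ k * (1 - r) ^ (m - k) = r ^ c * r ^ ((k : ℝ) - c) * (1 - r) ^ (m - k) := by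
          rw [← Real.rpow_add hr0, add_sub_cancel, Real.rpow_natCast]
      _ ≤ r ^ c * (1 - r) ^ ((k : ℝ) - c) * (1 - r) ^ (m - k) := by
          gcongr
          linarith
      _ = r ^ c * (1 - r) ^ ((m : ℝ) - c) := by
          rw [hsplit, Real.rpow_add hr1, Real.rpow_natCast, mul_assoc]
  calc binomTail m r c
      ≤ ∑ k ∈ (range (m + 1)).filter (fun k : ℕ => c ≤ k),
          (m.choose k : ℝ) * (r ^ c * (1 - r) ^ ((m : ℝ) - c)) :=
        sum_le_sum fun k hk => by
          rw [mul_assoc]; exact mul_le_mul_of_nonneg_left (hterm k hk) (by positivity)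
    _ ≤ ∑ k ∈ range (m + 1), (m.choose k : ℝ) * (r ^ c * (1 - r) ^ ((m : ℝ) - c)) :=
        sum_le_sum_of_subset_of_nonneg (filter_subset _ _) fun _ _ _ => by positivity
    _ = 2 ^ (m : ℝ) * r ^ c * (1 - r) ^ ((m : ℝ) - c) := by
        rw [← sum_mul, ← Nat.cast_sum, Nat.sum_range_choose, mul_assoc]
        norm_num

end binomTail

lemma Nat.choose_le_succ_mul_choose_succ {m k : ℕ} (h : k < m) :
    m.choose k ≤ (m + 1) * m.choose (k + 1) :=
  calc m.choose k ≤ m.choose k * (m - k) := Nat.le_mul_of_pos_right _ (by omega)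
    _ = m.choose (k + 1) * (k + 1) := (Nat.choose_succ_right_eq m k).symm
    _ ≤ (m + 1) * m.choose (k + 1) := by rw [mul_comm]; gcongr

lemma Nat.two_pow_le_succ_pow_mul_choose_half_add {m : ℕ} :
    ∀ {j : ℕ}, m / 2 + j ≤ m → 2 ^ m ≤ (m + 1) ^ (j + 1) * m.choose (m / 2 + j)
  | 0, _ => by
    calc 2 ^ m = ∑ i ∈ range (m + 1), m.choose i := (Nat.sum_range_choose m).symm
      _ ≤ ∑ _i ∈ range (m + 1), m.choose (m / 2) :=
          sum_le_sum fun i _ => Nat.choose_le_middle i m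
      _ = (m + 1) ^ (0 + 1) * m.choose (m / 2 + 0) := by simp
  | j + 1, h => by
    calc 2 ^ m ≤ (m + 1) ^ (j + 1) * m.choose (m / 2 + j) :=
          Nat.two_pow_le_succ_pow_mul_choose_half_add (by omega)
      _ ≤ (m + 1) ^ (j + 1) * ((m + 1) * m.choose (m / 2 + j + 1)) := by
          gcongr; exact Nat.choose_le_succ_mul_choose_succ (by omega)
      _ = (m + 1) ^ (j + 1 + 1) * m.choose (m / 2 + (j + 1)) := by rw [← add_assoc]; ring

lemma Nat.cast_div_two_add_two_mem_Icc (m : ℕ) :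
    ((m / 2 + 2 : ℕ) : ℝ) ∈ Set.Icc ((m : ℝ) / 2 + 3 / 2) (m / 2 + 2) := by
  have : (m : ℝ) ≤ 2 * (m / 2 : ℕ) + 1 := by exact_mod_cast (by omega : m ≤ 2 * (m / 2) + 1)
  have : ((m / 2 : ℕ) : ℝ) ≤ m / 2 := Nat.cast_div_le
  push_cast
  constructor <;> linarith

lemma eventually_le_of_tendsto_div_natCast {m : ℕ → ℕ} {a : ℝ} (ha : 0 < a)
    (hm : Tendsto (fun n : ℕ => (m n : ℝ) / n) atTop (𝓝 a)) (j : ℕ) :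
    ∀ᶠ n in atTop, j ≤ m n := by
  filter_upwards [(tendsto_atTop_of_tendsto_div_natCast ha hm).eventually_ge_atTop (j : ℝ)]
    with n hn
  exact_mod_cast hn

lemma hasDecayRate_choose_div_two_pow {m : ℕ → ℕ} {a : ℝ} (ha : 0 < a)
    (hm : Tendsto (fun n : ℕ => (m n : ℝ) / n) atTop (𝓝 a)) :
    HasDecayRate (fun n => (m n).choose (m n / 2 + 2) / 2 ^ m n) 0 := by
  have hpoly : HasDecayRate (fun n => (((m n : ℝ) + 1) ^ 3)⁻¹) 0 := by
    simpa [HasDecayRate, Real.log_inv, Real.log_pow, mul_div_assoc] using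
      (tendsto_log_add_one_div_natCast ha hm).const_mul 3
  refine hpoly.of_le_of_le (hasDecayRate_const 1) (.of_forall fun n => by positivity) ?_
    (.of_forall fun n => div_le_one_of_le₀ (mod_cast Nat.choose_le_two_pow _ _) (by positivity))
  filter_upwards [eventually_le_of_tendsto_div_natCast ha hm 4] with n hn
  have : (2 : ℝ) ^ m n ≤ ((m n : ℝ) + 1) ^ 3 * (m n).choose (m n / 2 + 2) := by
    exact_mod_cast Nat.two_pow_le_succ_pow_mul_choose_half_add (j := 2) (by omega)
  rw [le_div_iff₀ (by positivity), inv_mul_eq_div, div_le_iff₀ (by positivity)]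
  linarith

theorem hasDecayRate_binomTail {r a : ℝ} (hr0 : 0 < r) (hr : r ≤ 1 / 2) (ha : 0 < a)
    {m : ℕ → ℕ} {c : ℕ → ℝ} (hm : Tendsto (fun n : ℕ => (m n : ℝ) / n) atTop (𝓝 a))
    (hc : Tendsto (fun n : ℕ => c n / n) atTop (𝓝 (a / 2))) (hcm : ∀ n, c n ≤ m n / 2 + 1) :
    HasDecayRate (fun n => binomTail (m n) r (c n)) (a * Dhalf r) := by
  have hr1 : r < 1 := by linarith
  set k : ℕ → ℕ := fun n => m n / 2 + 2 with hk_def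
  have hkm : ∀ᶠ n in atTop, k n ≤ m n := by
    filter_upwards [eventually_le_of_tendsto_div_natCast ha hm 4] with n hn
    simp only [hk_def]
    omega
  have hk_half : ∀ n, (k n : ℝ) ∈ Set.Icc ((m n : ℝ) / 2 + 3 / 2) (m n / 2 + 2) :=
    fun n => Nat.cast_div_two_add_two_mem_Icc (m n)
  have hk : Tendsto (fun n : ℕ => (k n : ℝ) / n) atTop (𝓝 (a / 2)) := by
    refine tendsto_div_natCast_of_abs_sub_le (y := fun n => (m n : ℝ) / 2) (C := 2) ?_
      fun n => ?_
    · simpa only [div_right_comm] using hm.div_const 2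
    · rw [abs_le]; constructor <;> linarith [(hk_half n).1, (hk_half n).2]
  have hC : ∀ᶠ n in atTop, (0 : ℝ) < (m n).choose (m n / 2 + 2) / 2 ^ m n := by
    filter_upwards [hkm] with n hn
    have : 0 < (m n).choose (k n) := Nat.choose_pos hn
    positivity
  have hg : ∀ n, 0 < (2 : ℝ) ^ (m n : ℝ) * r ^ (k n : ℝ) * (1 - r) ^ ((m n : ℝ) - k n) :=
    fun n => by
      have : 0 < 1 - r := by linarith
      positivity
  have hlower := (hasDecayRate_choose_div_two_pow ha hm).mul
    (hasDecayRate_two_rpow_mul_rpow_mul_rpow hr0 hr1 hm hk) hC (.of_forall hg)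
  rw [zero_add] at hlower
  refine hlower.of_le_of_le (hasDecayRate_two_rpow_mul_rpow_mul_rpow hr0 hr1 hm hc)
    (hC.mono fun n h => mul_pos h (hg n)) ?_ (.of_forall fun n => binomTail_le hr0 hr)
  filter_upwards [hkm] with n hn
  calc _ = ((m n).choose (k n) : ℝ) * r ^ k n * (1 - r) ^ (m n - k n) := by
        rw [← Nat.cast_sub hn]
        simp only [Real.rpow_natCast, hk_def]
        field_simp
    _ ≤ binomTail (m n) r (c n) :=
        choose_mul_pow_le_binomTail hr0.le hr1.le (by linarith [hcm n, (hk_half n).1]) hn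

section CountingIndependentEvents

variable {ι β : Type*} [DecidableEq β] {b : β}

lemma setOf_filter_eq_eq_biInter [DecidableEq ι] {α : Type*} {ξ : ι → α → β} {s T : Finset ι}
    (hT : T ⊆ s) :
    {ω | {i ∈ s | ξ i ω = b} = T} = ⋂ i ∈ s, ξ i ⁻¹' (if i ∈ T then {b} else {b}ᶜ) := by
  ext ω
  simp only [Set.mem_iInter, Set.mem_preimage]
  constructor
  · rintro rfl i hi
    by_cases h : ξ i ω = b <;> simp [hi, h]
  · intro h
    ext i
    by_cases hi : i ∈ s
    · have := h i hi
      by_cases hiT : i ∈ T <;> simp_all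
    · simp [hi, show i ∉ T from fun h => hi (hT h)]

lemma measurableSet_le_card_filter [MeasurableSpace β] [MeasurableSingletonClass β] {α : Type*}
    {m : MeasurableSpace α} {ξ : ι → α → β} (hξ : ∀ i, Measurable[m] (ξ i)) (s : Finset ι)
    (c : ℝ) : MeasurableSet[m] {ω | c ≤ #{i ∈ s | ξ i ω = b}} := by
  have hcount : Measurable[m] fun ω => #{i ∈ s | ξ i ω = b} := by
    simp only [card_filter]
    exact Finset.measurable_sum s fun i _ =>
      Measurable.ite (hξ i (measurableSet_singleton b)) measurable_const measurable_const
  exact hcount (MeasurableSet.of_discrete (s := {k : ℕ | c ≤ k}))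

variable [DecidableEq ι] [MeasurableSpace β] [MeasurableSingletonClass β] {ξ : ι → Ω → β}
  {μ : Measure Ω} [IsProbabilityMeasure μ] {r : ℝ} {s : Finset ι}

lemma measureReal_setOf_filter_eq (hξ : ∀ i, Measurable (ξ i)) (hind : iIndepFun ξ μ)
    (hr : ∀ i ∈ s, μ.real (ξ i ⁻¹' {b}) = r) {T : Finset ι} (hT : T ⊆ s) :
    μ.real {ω | {i ∈ s | ξ i ω = b} = T} = r ^ #T * (1 - r) ^ (#s - #T) := by
  have hfactor : ∀ i ∈ s, (μ (ξ i ⁻¹' (if i ∈ T then {b} else {b}ᶜ))).toReal =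
      if i ∈ T then r else 1 - r := fun i hi => by
    split_ifs
    · exact hr i hi
    · rw [Set.preimage_compl, ← measureReal_def,
        probReal_compl_eq_one_sub (hξ i (measurableSet_singleton b)), hr i hi]
  rw [setOf_filter_eq_eq_biInter hT, measureReal_def,
    hind.meas_biInter fun i _ => ⟨_, by split_ifs <;> measurability, rfl⟩,
    ENNReal.toReal_prod, prod_congr rfl hfactor, ← prod_sdiff hT, mul_comm,
    prod_congr rfl fun i hi => if_pos hi,
    prod_congr rfl fun i hi => if_neg (mem_sdiff.1 hi).2,
    prod_const, prod_const, card_sdiff_of_subset hT]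

lemma measureReal_le_card_filter_eq_binomTail (hξ : ∀ i, Measurable (ξ i)) (hind : iIndepFun ξ μ)
    (hr : ∀ i ∈ s, μ.real (ξ i ⁻¹' {b}) = r) (c : ℝ) :
    μ.real {ω | c ≤ #{i ∈ s | ξ i ω = b}} = binomTail #s r c := by
  have hunion : {ω | c ≤ #{i ∈ s | ξ i ω = b}} =
      ⋃ T ∈ s.powerset.filter (fun T => c ≤ #T), {ω | {i ∈ s | ξ i ω = b} = T} := by
    ext ω
    simp only [Set.mem_iUnion, mem_filter, mem_powerset, exists_prop]
    exact ⟨fun h => ⟨_, ⟨filter_subset _ _, h⟩, rfl⟩, by rintro ⟨T, ⟨-, hT⟩, rfl⟩; exact hT⟩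
  rw [hunion, measureReal_biUnion_finset]
  · rw [sum_congr rfl fun T hT => measureReal_setOf_filter_eq hξ hind hr
      (mem_powerset.1 (mem_filter.1 hT).1), sum_filter, binomTail, sum_filter,
      sum_powerset_apply_card (fun k => if c ≤ k then r ^ k * (1 - r) ^ (#s - k) else 0)]
    simp only [nsmul_eq_mul, mul_ite, mul_zero, mul_assoc]
  · intro T _ T' _ hne
    exact Set.disjoint_left.2 fun ω h h' => hne (h.symm.trans h')
  · intro T hT
    rw [setOf_filter_eq_eq_biInter (mem_powerset.1 (mem_filter.1 hT).1)]
    exact Finset.measurableSet_biInter _ fun i _ => hξ i (by split_ifs <;> measurability)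

end CountingIndependentEvents

lemma ProbabilityTheory.iIndepFun.measureReal_inter_of_sum_elim {ι κ β : Type*}
    [mβ : MeasurableSpace β] {μ : Measure Ω} {Y : ι → Ω → β} {N : κ → Ω → β}
    (hY : ∀ i, Measurable (Y i)) (hN : ∀ j, Measurable (N j)) (h : iIndepFun (Sum.elim Y N) μ)
    {S T : Set Ω} (hS : MeasurableSet[⨆ i, mβ.comap (Y i)] S)
    (hT : MeasurableSet[⨆ j, mβ.comap (N j)] T) : μ.real (S ∩ T) = μ.real S * μ.real T := by
  have hmeas : ∀ i, Measurable (Sum.elim Y N i) := Sum.forall.2 ⟨hY, hN⟩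
  have hindep := indep_iSup_of_disjoint (fun i => (hmeas i).comap_le) h
    Set.isCompl_range_inl_range_inr.disjoint
  simp only [iSup_range, Sum.elim_inl, Sum.elim_inr] at hindep
  simp only [measureReal_def, (Indep_iff _ _ μ).1 hindep S T hS hT, ENNReal.toReal_mul]

lemma card_Icc_ceil_one_sub_mul {ε : ℝ} (hε0 : 0 ≤ ε) (hε1 : ε ≤ 1) (n : ℕ) :
    #(Icc ⌈(1 - ε) * n⌉₊ n) = ⌊ε * n⌋₊ + 1 := by
  have hεn : ε * n ≤ n := mul_le_of_le_one_left n.cast_nonneg hε1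
  have hk : ⌊ε * n⌋₊ ≤ n := Nat.floor_le_of_le hεn
  have hceil : (⌈(1 - ε) * n⌉₊ : ℤ) = n - ⌊ε * n⌋₊ := by
    rw [Int.natCast_ceil_eq_ceil (by nlinarith), Int.natCast_floor_eq_floor (by positivity),
      show (1 - ε) * n = -(ε * n) + (n : ℕ) by ring, Int.ceil_add_natCast, Int.ceil_neg]
    ring
  rw [Nat.card_Icc]
  omega

section PlusMinusOne

variable {ι α : Type*} {ξ : ι → α → ℤ} {s : Finset ι} {ω : α}

lemma card_filter_eq_one_add_card_filter_eq_neg_one (hξ : ∀ i ∈ s, ξ i ω = 1 ∨ ξ i ω = -1) :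
    #{i ∈ s | ξ i ω = 1} + #{i ∈ s | ξ i ω = -1} = #s := by
  rw [← card_filter_add_card_filter_not (s := s) (p := fun i => ξ i ω = 1)]
  congr 2
  refine filter_congr fun i hi => ?_
  rcases hξ i hi with h | h <;> simp [h]

lemma not_half_le_card_filter_eq_one_iff (hξ : ∀ i ∈ s, ξ i ω = 1 ∨ ξ i ω = -1) {t c : ℕ}
    (htc : t + c = 2 * #s + 1) :
    ¬ ((t : ℝ) / 2 ≤ #{i ∈ s | ξ i ω = 1}) ↔ (c : ℝ) / 2 ≤ #{i ∈ s | ξ i ω = -1} := by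
  have := card_filter_eq_one_add_card_filter_eq_neg_one hξ
  generalize #{i ∈ s | ξ i ω = 1} = a at *
  generalize #{i ∈ s | ξ i ω = -1} = b at *
  rw [not_le, lt_div_iff₀ two_pos, div_le_iff₀ two_pos]
  norm_cast
  omega

end PlusMinusOne

section Teaching

variable {α : Type*} {Y N : ℕ → α → ℤ}

lemma thetaTilde_eq_neg_one_iff (hYrange : ∀ i ω, Y i ω = 1 ∨ Y i ω = -1) (m : ℕ) (ω : α) :
    thetaTilde Y m ω = -1 ↔ ((m : ℝ) + 1) / 2 ≤ #{j ∈ Icc 1 m | Y j ω = -1} := by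
  have h := not_half_le_card_filter_eq_one_iff (s := Icc 1 m) (ω := ω) (fun i _ => hYrange i ω)
    (t := m) (c := m + 1) (by simp only [Nat.card_Icc]; omega)
  push_cast at h
  rw [← h, thetaTilde]
  split_ifs with hθ <;> simp [hθ]

lemma epsErr_eq (hNrange : ∀ i ω, N i ω = 1 ∨ N i ω = -1) {ε : ℝ} (hε0 : 0 ≤ ε) (hε1 : ε ≤ 1)
    (n : ℕ) :
    epsErr Y N ε n =
      {ω | thetaTilde Y ⌊(1 - ε) * n⌋₊ ω = -1}ᶜ ∩
        {ω | ((⌊ε * n⌋₊ : ℝ) + 3) / 2 ≤ #{i ∈ Icc ⌈(1 - ε) * n⌉₊ n | N i ω = -1}} ∪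
      {ω | thetaTilde Y ⌊(1 - ε) * n⌋₊ ω = -1} ∩
        {ω | (⌊ε * n⌋₊ : ℝ) / 2 ≤ #{i ∈ Icc ⌈(1 - ε) * n⌉₊ n | N i ω = -1}}ᶜ := by
  ext ω
  have hθ : thetaTilde Y ⌊(1 - ε) * n⌋₊ ω = 1 ∨ thetaTilde Y ⌊(1 - ε) * n⌋₊ ω = -1 := by
    unfold thetaTilde; split_ifs <;> simp
  rcases hθ with hθ | hθ
  · have h := not_half_le_card_filter_eq_one_iff (s := Icc ⌈(1 - ε) * n⌉₊ n) (ω := ω)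
      (fun i _ => hNrange i ω) (t := ⌊ε * n⌋₊) (c := ⌊ε * n⌋₊ + 3)
      (by rw [card_Icc_ceil_one_sub_mul hε0 hε1]; omega)
    push_cast at h
    simpa [epsErr, hθ] using h
  · have hflip : ∀ i, -N i ω = 1 ↔ N i ω = -1 := fun i => by omega
    simp [epsErr, hθ, hflip]

end Teaching

lemma measureReal_preimage_neg_one {μ : Measure Ω} [IsProbabilityMeasure μ] {ξ : Ω → ℤ}
    (hξ : Measurable ξ) (hrange : ∀ ω, ξ ω = 1 ∨ ξ ω = -1) {r : ℝ} (hr : r ≤ 1)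
    (hdist : μ {ω | ξ ω = 1} = ENNReal.ofReal (1 - r)) : μ.real (ξ ⁻¹' {-1}) = r := by
  have hcompl : ξ ⁻¹' {-1} = {ω | ξ ω = 1}ᶜ := by
    ext ω; rcases hrange ω with h | h <;> simp [h]
  rw [hcompl, probReal_compl_eq_one_sub (s := {ω | ξ ω = 1}) (hξ (measurableSet_singleton 1)),
    measureReal_def, hdist, ENNReal.toReal_ofReal (by linarith)]
  ring

lemma measureReal_epsErr {Y N : ℕ → Ω → ℤ} {μ : Measure Ω} [IsProbabilityMeasure μ] {p q : ℝ}
    (hp : p ≤ 1) (hq : 0 ≤ q) (hYmeas : ∀ i, Measurable (Y i)) (hNmeas : ∀ i, Measurable (N i))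
    (hYrange : ∀ i ω, Y i ω = 1 ∨ Y i ω = -1) (hNrange : ∀ i ω, N i ω = 1 ∨ N i ω = -1)
    (hYdist : ∀ i, μ {ω | Y i ω = 1} = ENNReal.ofReal (1 - p))
    (hNdist : ∀ i, μ {ω | N i ω = -1} = ENNReal.ofReal q)
    (hindep : iIndepFun (Sum.elim Y N) μ) {ε : ℝ} (hε0 : 0 ≤ ε) (hε1 : ε ≤ 1) (n : ℕ) :
    μ.real (epsErr Y N ε n) =
      (1 - binomTail ⌊(1 - ε) * n⌋₊ p ((⌊(1 - ε) * n⌋₊ + 1) / 2)) *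
          binomTail (⌊ε * n⌋₊ + 1) q ((⌊ε * n⌋₊ + 3) / 2) +
        binomTail ⌊(1 - ε) * n⌋₊ p ((⌊(1 - ε) * n⌋₊ + 1) / 2) *
          (1 - binomTail (⌊ε * n⌋₊ + 1) q (⌊ε * n⌋₊ / 2)) := by
  set m := ⌊(1 - ε) * n⌋₊
  set W := Icc ⌈(1 - ε) * n⌉₊ n
  set A := {ω | thetaTilde Y m ω = -1}
  set B := fun c : ℝ => {ω | c ≤ #{i ∈ W | N i ω = -1}}
  have hA_eq : A = {ω | ((m : ℝ) + 1) / 2 ≤ #{j ∈ Icc 1 m | Y j ω = -1}} :=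
    Set.ext fun ω => thetaTilde_eq_neg_one_iff hYrange m ω
  have hAY : MeasurableSet[⨆ i, MeasurableSpace.comap (Y i) inferInstance] A :=
    hA_eq ▸ measurableSet_le_card_filter
      (fun j => Measurable.of_comap_le (le_iSup (fun i => MeasurableSpace.comap (Y i) _) j)) _ _
  have hBN : ∀ c, MeasurableSet[⨆ i, MeasurableSpace.comap (N i) inferInstance] (B c) :=
    fun c => measurableSet_le_card_filter
      (fun j => Measurable.of_comap_le (le_iSup (fun i => MeasurableSpace.comap (N i) _) j)) _ _
  have hA : μ.real A = binomTail m p ((m + 1) / 2) := by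
    rw [hA_eq, measureReal_le_card_filter_eq_binomTail hYmeas
      (hindep.precomp (g := Sum.inl) Sum.inl_injective)
      fun j _ => measureReal_preimage_neg_one (hYmeas j) (hYrange j) hp (hYdist j),
      Nat.card_Icc, Nat.add_sub_cancel]
  have hB : ∀ c, μ.real (B c) = binomTail (⌊ε * n⌋₊ + 1) q c := fun c => by
    rw [measureReal_le_card_filter_eq_binomTail (r := q) hNmeas
      (hindep.precomp (g := Sum.inr) Sum.inr_injective) fun i _ => by
        simp only [measureReal_def, Set.preimage, Set.mem_singleton_iff, hNdist i,
          ENNReal.toReal_ofReal hq],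
      card_Icc_ceil_one_sub_mul hε0 hε1]
  have hAmeas : MeasurableSet A := hA_eq ▸ measurableSet_le_card_filter hYmeas _ _
  have hBmeas : ∀ c, MeasurableSet (B c) := fun c => measurableSet_le_card_filter hNmeas _ _
  rw [epsErr_eq hNrange hε0 hε1 n, measureReal_union
      (Set.disjoint_left.2 fun ω h h' => h.1 h'.1) (hAmeas.inter (hBmeas _).compl),
    hindep.measureReal_inter_of_sum_elim hYmeas hNmeas hAY.compl (hBN _),
    hindep.measureReal_inter_of_sum_elim hYmeas hNmeas hAY (hBN _).compl,
    probReal_compl_eq_one_sub hAmeas, probReal_compl_eq_one_sub (hBmeas _), hA, hB, hB]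

lemma hasDecayRate_one_sub_mul_add_mul_one_sub {a b c : ℕ → ℝ} {α β γ : ℝ}
    (ha : HasDecayRate a α) (hb : HasDecayRate b β) (hc : HasDecayRate c γ) (hα : 0 < α)
    (hγ : 0 < γ) (ha0 : ∀ᶠ n in atTop, 0 < a n) (hb0 : ∀ᶠ n in atTop, 0 < b n)
    (hc0 : ∀ᶠ n in atTop, 0 < c n) :
    HasDecayRate (fun n => (1 - a n) * b n + a n * (1 - c n)) (min α β) := by
  have hmax := ha.max hb ha0 hb0
  have hmax0 : ∀ᶠ n in atTop, 0 < max (a n) (b n) := ha0.mono fun n h => lt_max_of_lt_left h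
  have hlower := (hasDecayRate_const (1 / 2)).mul hmax (.of_forall fun _ => by norm_num) hmax0
  have hupper := (hasDecayRate_const 2).mul hmax (.of_forall fun _ => by norm_num) hmax0
  rw [zero_add] at hlower hupper
  have ha_half := (ha.tendsto_zero hα ha0).eventually (eventually_le_nhds one_half_pos)
  have hc_half := (hc.tendsto_zero hγ hc0).eventually (eventually_le_nhds one_half_pos)
  refine hlower.of_le_of_le hupper (hmax0.mono fun n h => by positivity) ?_ ?_ <;>
    filter_upwards [ha_half, hc_half, ha0, hb0, hc0] with n ha2 hc2 ha0 hb0 hc0 <;>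
    rcases max_cases (a n) (b n) with ⟨hm, hab⟩ | ⟨hm, hab⟩ <;> rw [hm] <;>
    nlinarith

lemma min_one_sub_div_mul_div_mul {a b : ℝ} (hab : a + b ≠ 0) :
    min ((1 - a / (a + b)) * a) (a / (a + b) * b) = a * b / (a + b) := by
  have h : (1 - a / (a + b)) * a = a / (a + b) * b := by field_simp; ring
  rw [h, min_self, div_mul_eq_mul_div]

lemma isGreatest_image_min_one_sub_mul_mul {a b : ℝ} (ha : 0 < a) (hb : 0 < b) :
    IsGreatest ((fun ε => min ((1 - ε) * a) (ε * b)) '' Set.Ioo 0 1) (a * b / (a + b)) := by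
  refine ⟨⟨a / (a + b), ⟨by positivity, (div_lt_one (by positivity)).2 (by linarith)⟩,
    min_one_sub_div_mul_div_mul (by positivity)⟩, ?_⟩
  rintro _ ⟨ε, -, rfl⟩
  rw [min_le_iff, le_div_iff₀ (by positivity), le_div_iff₀ (by positivity)]
  by_contra! h
  nlinarith

theorem hasDecayRate_measureReal_epsErr {μ : Measure Ω} [IsProbabilityMeasure μ] {p q : ℝ}
    (hp : p ∈ Set.Ioo (0 : ℝ) (1 / 2)) (hq : q ∈ Set.Ioo (0 : ℝ) (1 / 2)) {Y N : ℕ → Ω → ℤ}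
    (hYmeas : ∀ i, Measurable (Y i)) (hNmeas : ∀ i, Measurable (N i))
    (hYrange : ∀ i ω, Y i ω = 1 ∨ Y i ω = -1) (hNrange : ∀ i ω, N i ω = 1 ∨ N i ω = -1)
    (hYdist : ∀ i, μ {ω | Y i ω = 1} = ENNReal.ofReal (1 - p))
    (hNdist : ∀ i, μ {ω | N i ω = -1} = ENNReal.ofReal q)
    (hindep : iIndepFun (Sum.elim Y N) μ) {ε : ℝ} (hε : ε ∈ Set.Ioo (0 : ℝ) 1) :
    HasDecayRate (fun n => μ.real (epsErr Y N ε n))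
      (min ((1 - ε) * Dhalf p) (ε * Dhalf q)) := by
  obtain ⟨hp0, hp⟩ := hp
  obtain ⟨hq0, hq⟩ := hq
  obtain ⟨hε0, hε1⟩ := hε
  have h1ε : 0 < 1 - ε := by linarith
  have hm : Tendsto (fun n : ℕ => (⌊(1 - ε) * n⌋₊ : ℝ) / n) atTop (𝓝 (1 - ε)) :=
    (tendsto_nat_floor_mul_div_atTop h1ε.le).comp tendsto_natCast_atTop_atTop
  have hk : Tendsto (fun n : ℕ => (⌊ε * n⌋₊ : ℝ) / n) atTop (𝓝 ε) :=
    (tendsto_nat_floor_mul_div_atTop hε0.le).comp tendsto_natCast_atTop_atTop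
  have hk1 : Tendsto (fun n : ℕ => ((⌊ε * n⌋₊ + 1 : ℕ) : ℝ) / n) atTop (𝓝 ε) :=
    tendsto_div_natCast_of_abs_sub_le (C := 1) hk fun n => by simp
  have hhalf : ∀ {x : ℕ → ℝ} {a : ℝ}, Tendsto (fun n : ℕ => x n / n) atTop (𝓝 a) →
      ∀ d : ℝ, Tendsto (fun n : ℕ => (x n + d) / 2 / n) atTop (𝓝 (a / 2)) := fun hx d => by
    have h := (hx.div_const 2).add (tendsto_const_div_atTop_nhds_zero_nat (d / 2))
    rw [add_zero] at h
    exact h.congr fun n => by ring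
  have hA := hasDecayRate_binomTail hp0 hp.le h1ε hm (hhalf hm 1) fun n => by linarith
  have hB₁ := hasDecayRate_binomTail hq0 hq.le hε0 hk1 (hhalf hk 3)
    fun n => by push_cast; linarith
  have hB₂ := hasDecayRate_binomTail hq0 hq.le hε0 hk1 (by simpa using hhalf hk 0)
    fun n => by push_cast; linarith
  have hA0 : ∀ᶠ n : ℕ in atTop,
      0 < binomTail ⌊(1 - ε) * n⌋₊ p ((⌊(1 - ε) * n⌋₊ + 1) / 2) := by
    filter_upwards [eventually_le_of_tendsto_div_natCast h1ε hm 1] with n hn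
    exact binomTail_pos hp0 (by linarith) (by linarith [(Nat.one_le_cast (α := ℝ)).2 hn])
  have hB₁0 : ∀ᶠ n : ℕ in atTop, 0 < binomTail (⌊ε * n⌋₊ + 1) q ((⌊ε * n⌋₊ + 3) / 2) := by
    filter_upwards [eventually_le_of_tendsto_div_natCast hε0 hk 1] with n hn
    exact binomTail_pos hq0 (by linarith)
      (by push_cast; linarith [(Nat.one_le_cast (α := ℝ)).2 hn])
  have hB₂0 : ∀ n : ℕ, 0 < binomTail (⌊ε * n⌋₊ + 1) q (⌊ε * n⌋₊ / 2) := fun n =>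
    binomTail_pos hq0 (by linarith)
      (by push_cast; linarith [Nat.cast_nonneg (α := ℝ) ⌊ε * n⌋₊])
  convert hasDecayRate_one_sub_mul_add_mul_one_sub hA hB₁ hB₂
    (mul_pos h1ε (Dhalf_pos hp0 hp)) (mul_pos hε0 (Dhalf_pos hq0 hq)) hA0 hB₁0 (.of_forall hB₂0)
    using 2 with n
  exact measureReal_epsErr (by linarith) hq0.le hYmeas hNmeas hYrange hNrange hYdist hNdist
    hindep hε0.le hε1.le n

/-- For each fixed `ε ∈ (0,1)`, the ε-teaching strategy has learning rate
`min((1−ε)D(1/2‖p), ε·D(1/2‖q))`; consequently the rate optimized over `ε ∈ (0,1)` equals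
`D(1/2‖p)·D(1/2‖q)/(D(1/2‖p)+D(1/2‖q))`, attained at `ε = D(1/2‖p)/(D(1/2‖p)+D(1/2‖q))`. -/
theorem stmt7
    (μ : Measure Ω) [IsProbabilityMeasure μ]
    (p q : ℝ) (hp : p ∈ Set.Ioo (0:ℝ) (1/2)) (hq : q ∈ Set.Ioo (0:ℝ) (1/2))
    (Y N : ℕ → Ω → ℤ)
    (hYmeas : ∀ i, Measurable (Y i)) (hNmeas : ∀ i, Measurable (N i))
    (hYrange : ∀ i ω, Y i ω = 1 ∨ Y i ω = -1)
    (hNrange : ∀ i ω, N i ω = 1 ∨ N i ω = -1)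
    (hYdist : ∀ i, μ {ω | Y i ω = 1} = ENNReal.ofReal (1 - p))
    (hNdist : ∀ i, μ {ω | N i ω = -1} = ENNReal.ofReal q)
    (hindep : iIndepFun (m := fun _ => (inferInstance : MeasurableSpace ℤ)) (Sum.elim Y N) μ) :
    (∀ ε ∈ Set.Ioo (0:ℝ) 1,
      Tendsto (fun n : ℕ => -(Real.log ((μ (epsErr Y N ε n)).toReal)) / (n : ℝ))
        atTop (nhds (min ((1-ε) * Dhalf p) (ε * Dhalf q)))) ∧
    IsGreatest ((fun ε => min ((1-ε) * Dhalf p) (ε * Dhalf q)) '' Set.Ioo (0:ℝ) 1)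
      (Dhalf p * Dhalf q / (Dhalf p + Dhalf q)) ∧
    min ((1 - Dhalf p / (Dhalf p + Dhalf q)) * Dhalf p)
        ((Dhalf p / (Dhalf p + Dhalf q)) * Dhalf q)
      = Dhalf p * Dhalf q / (Dhalf p + Dhalf q) := by
  have hDp := Dhalf_pos hp.1 hp.2
  have hDq := Dhalf_pos hq.1 hq.2
  exact ⟨fun ε hε => hasDecayRate_measureReal_epsErr hp hq hYmeas hNmeas hYrange hNrange
    hYdist hNdist hindep hε, isGreatest_image_min_one_sub_mul_mul hDp hDq,
    min_one_sub_div_mul_div_mul (by positivity)⟩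
end
end

section
/- Let n ≥ 1 and σ₁, σ₂ ≥ 0. For every n×n real matrix A with A·𝟏 = 𝟏 and every b ∈ ℝⁿ with bᵀ𝟏 = 1, one has σ₁² bᵀAAᵀb + σ₂² bᵀb ≥ (σ₁² + σ₂²)/n, with equality when A = I and b = (1/n)𝟏. In particular, the simple forwarding + simple averaging strategy (A* = I, b* = (1/n)𝟏) is a joint minimizer of f(A,b) = σ₁² bᵀAAᵀb + σ₂² bᵀb over the set { (A,b) : A𝟏 = 𝟏, bᵀ𝟏 = 1 }. -/
open Matrix

noncomputable section

/-- The all-ones vector `𝟏 ∈ ℝⁿ`. -/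
def onesV (n : ℕ) : Fin n → ℝ := fun _ => 1

/-- The variance `f(A,b) = σ₁² bᵀAAᵀb + σ₂² bᵀb` of the student's linear estimator. -/
def fvar (n : ℕ) (σ₁ σ₂ : ℝ) (A : Matrix (Fin n) (Fin n) ℝ) (b : Fin n → ℝ) : ℝ :=
  σ₁^2 * (b ⬝ᵥ (A * Aᵀ).mulVec b) + σ₂^2 * (b ⬝ᵥ b)

lemma key (n : ℕ) (hn : 1 ≤ n) (v : Fin n → ℝ) (hv : v ⬝ᵥ onesV n = 1) :
    1/(n:ℝ) ≤ v ⬝ᵥ v := by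
  have hn0 : (0:ℝ) < n := by exact_mod_cast hn
  have h := sq_sum_le_card_mul_sum_sq (s := Finset.univ) (f := v)
  have hs : ∑ i, v i = 1 := by
    simpa [dotProduct, onesV] using hv
  rw [hs] at h
  simp only [Finset.card_univ, Fintype.card_fin, one_pow] at h
  rw [div_le_iff₀ hn0, dotProduct]
  simp_rw [sq] at h
  rw [mul_comm]
  exact_mod_cast h

lemma vecMul_self (n : ℕ) (A : Matrix (Fin n) (Fin n) ℝ) (b : Fin n → ℝ) :
    b ᵥ* A = Aᵀ *ᵥ b := by
  rw [← transpose_transpose A, vecMul_transpose, transpose_transpose]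

lemma key2 (n : ℕ) (hn : 1 ≤ n) (σ₁ σ₂ : ℝ) :
    (∀ (A : Matrix (Fin n) (Fin n) ℝ) (b : Fin n → ℝ),
      A.mulVec (onesV n) = onesV n → b ⬝ᵥ onesV n = 1 →
        (σ₁^2 + σ₂^2)/(n : ℝ) ≤ fvar n σ₁ σ₂ A b) := by
  intro A b hA hb
  have h1 : b ⬝ᵥ (A * Aᵀ).mulVec b = (Aᵀ.mulVec b) ⬝ᵥ (Aᵀ.mulVec b) := by
    rw [← mulVec_mulVec, dotProduct_mulVec, vecMul_self]
  have h2 : (Aᵀ.mulVec b) ⬝ᵥ onesV n = 1 := by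
    rw [← vecMul_self, ← dotProduct_mulVec, hA, hb]
  have k1 := key n hn (Aᵀ.mulVec b) h2
  have k2 := key n hn b hb
  have s1 := sq_nonneg σ₁
  have s2 := sq_nonneg σ₂
  unfold fvar
  rw [h1, add_div]
  have e1 : σ₁^2/(n:ℝ) = σ₁^2 * (1/(n:ℝ)) := by ring
  have e2 : σ₂^2/(n:ℝ) = σ₂^2 * (1/(n:ℝ)) := by ring
  rw [e1, e2]
  gcongr

lemma eqpart (n : ℕ) (hn : 1 ≤ n) (σ₁ σ₂ : ℝ) :
    fvar n σ₁ σ₂ (1 : Matrix (Fin n) (Fin n) ℝ) (((n : ℝ))⁻¹ • onesV n)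
      = (σ₁^2 + σ₂^2)/(n : ℝ) := by
  have hn0 : ((n:ℝ)) ≠ 0 := by positivity
  have hd : (((n : ℝ))⁻¹ • onesV n) ⬝ᵥ (((n : ℝ))⁻¹ • onesV n) = (n:ℝ)⁻¹ := by
    simp [dotProduct, onesV, Finset.sum_const]
    field_simp
  unfold fvar
  simp only [transpose_one, mul_one, one_mulVec, hd]
  field_simp

lemma dpart (n : ℕ) (hn : 1 ≤ n) :
    (((n : ℝ))⁻¹ • onesV n) ⬝ᵥ onesV n = 1 := by
  have hn0 : ((n:ℝ)) ≠ 0 := by positivity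
  simp [dotProduct, onesV, Finset.sum_const]
  field_simp

/-- For every row-stochastic `A` and every `b` with `bᵀ𝟏 = 1`,
`f(A,b) ≥ (σ₁²+σ₂²)/n`, with equality when `A = I`, `b = (1/n)𝟏`; in particular simple
forwarding + simple averaging is a joint minimizer of `f` over the constraint set. -/
theorem stmt11 (n : ℕ) (hn : 1 ≤ n) (σ₁ σ₂ : ℝ) (hσ₁ : 0 ≤ σ₁) (hσ₂ : 0 ≤ σ₂) :
    (∀ (A : Matrix (Fin n) (Fin n) ℝ) (b : Fin n → ℝ),
      A.mulVec (onesV n) = onesV n → b ⬝ᵥ onesV n = 1 →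
        (σ₁^2 + σ₂^2)/(n : ℝ) ≤ fvar n σ₁ σ₂ A b) ∧
    fvar n σ₁ σ₂ (1 : Matrix (Fin n) (Fin n) ℝ) (((n : ℝ))⁻¹ • onesV n)
      = (σ₁^2 + σ₂^2)/(n : ℝ) ∧
    (1 : Matrix (Fin n) (Fin n) ℝ).mulVec (onesV n) = onesV n ∧
    (((n : ℝ))⁻¹ • onesV n) ⬝ᵥ onesV n = 1 ∧
    IsLeast ((fun P : Matrix (Fin n) (Fin n) ℝ × (Fin n → ℝ) => fvar n σ₁ σ₂ P.1 P.2) ''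
        {P | P.1.mulVec (onesV n) = onesV n ∧ P.2 ⬝ᵥ onesV n = 1})
      ((σ₁^2 + σ₂^2)/(n : ℝ)) := by
  refine ⟨key2 n hn σ₁ σ₂, eqpart n hn σ₁ σ₂, one_mulVec _, dpart n hn, ?_, ?_⟩
  · exact ⟨(1, ((n : ℝ))⁻¹ • onesV n), ⟨one_mulVec _, dpart n hn⟩, eqpart n hn σ₁ σ₂⟩
  · rintro x ⟨⟨A, b⟩, ⟨hA, hb⟩, rfl⟩
    exact key2 n hn σ₁ σ₂ A b hA hb
end
end

section
/- Let p ∈ (0,1/2). Then for all n ≥ 1, P(B > n) ≤ e^{−n·D(1/2‖p)}/(1−2p) and P(B > n) ≥ e^{−n·D(1/2‖p)} · p(1−p)(1−2p)/(n+1); consequently, lim_{n→∞} (1/n) log P(B > n) = −D(1/2‖p). -/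
/-! With `ρ = √(p/(1-p))`, each step multiplies the mean of `ρ ^ X_N` by
`(1-p) ρ + p ρ⁻¹ = 2√(p(1-p)) = e^{-D(1/2‖p)} ≤ 1`. Freezing `ρ ^ X_N` at `ρ ^ 0 = 1` at the first
visit to `0` after time `n` therefore gives a supermartingale from time `n` on, whence
`P(B > n) ≤ E ρ ^ X_n = e^{-n D(1/2‖p)}`. Conversely `P(B > n) ≥ P(X_{2k} = 0)
= C(2k, k) (p(1-p))^k ≥ e^{-2k D(1/2‖p)} / (2k+1)` for the even time `2k ∈ {n+1, n+2}`.
The limit follows by squeezing. -/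

open MeasureTheory ProbabilityTheory Filter

noncomputable section

variable {Ω : Type*} [MeasurableSpace Ω]

open Finset
open scoped ENNReal

/-- The Bhattacharyya coefficient of `Bernoulli p` and `Bernoulli (1 - p)`. -/
def bhattacharyya (p : ℝ) : ℝ := 2 * √(p * (1 - p))

section bhattacharyya

variable {p : ℝ}

lemma bhattacharyya_nonneg (p : ℝ) : 0 ≤ bhattacharyya p := by
  unfold bhattacharyya; positivity

lemma bhattacharyya_pos (hp0 : 0 < p) (hp1 : p < 1) : 0 < bhattacharyya p := by
  have : 0 < p * (1 - p) := mul_pos hp0 (by linarith)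
  unfold bhattacharyya; positivity

lemma sq_bhattacharyya (hp0 : 0 ≤ p) (hp1 : p ≤ 1) : bhattacharyya p ^ 2 = 4 * (p * (1 - p)) := by
  rw [bhattacharyya, mul_pow, Real.sq_sqrt (mul_nonneg hp0 (by linarith))]
  norm_num

lemma bhattacharyya_le_one (hp0 : 0 ≤ p) (hp1 : p ≤ 1) : bhattacharyya p ≤ 1 := by
  have hsq := sq_bhattacharyya hp0 hp1
  nlinarith [sq_nonneg (1 - 2 * p), bhattacharyya_nonneg p]

/-- `ρ = √(p/(1-p))` minimises `(1-p) ρ + p ρ⁻¹`. -/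
lemma one_sub_mul_add_mul_inv_sqrt (hp0 : 0 < p) (hp1 : p < 1) :
    (1 - p) * √(p / (1 - p)) + p * (√(p / (1 - p)))⁻¹ = bhattacharyya p := by
  have key : ∀ a b : ℝ, 0 < a → 0 < b → b ^ 2 * (a / b) + a ^ 2 * (a / b)⁻¹ = 2 * (a * b) := by
    intro a b ha hb
    field_simp
    ring
  have h := key √p √(1 - p) (Real.sqrt_pos.2 hp0) (Real.sqrt_pos.2 (by linarith))
  rwa [Real.sq_sqrt hp0.le, Real.sq_sqrt (by linarith), ← Real.sqrt_div' _ (by linarith),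
    ← Real.sqrt_mul hp0.le] at h

lemma Dhalf_eq_neg_log_bhattacharyya (hp0 : 0 < p) (hp1 : p < 1) :
    Dhalf p = -Real.log (bhattacharyya p) := by
  have h1p : 0 < 1 - p := by linarith
  have hpp : 0 < p * (1 - p) := mul_pos hp0 h1p
  rw [Dhalf, bhattacharyya, Real.log_mul two_ne_zero (Real.sqrt_pos.2 hpp).ne',
    Real.log_sqrt hpp.le, Real.log_mul hp0.ne' h1p.ne', Real.log_div (by norm_num) hp0.ne',
    Real.log_div (by norm_num) h1p.ne', one_div, Real.log_inv]
  ring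

lemma exp_neg_mul_Dhalf (hp0 : 0 < p) (hp1 : p < 1) (n : ℕ) :
    Real.exp (-(n * Dhalf p)) = bhattacharyya p ^ n := by
  rw [Dhalf_eq_neg_log_bhattacharyya hp0 hp1, mul_neg, neg_neg, Real.exp_nat_mul,
    Real.exp_log (bhattacharyya_pos hp0 hp1)]

end bhattacharyya

lemma four_pow_le_succ_mul_centralBinom (k : ℕ) : 4 ^ k ≤ (2 * k + 1) * k.centralBinom := by
  rcases k.eq_zero_or_pos with rfl | hk
  · simp
  · exact (Nat.four_pow_le_two_mul_self_mul_centralBinom k hk).trans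
      (Nat.mul_le_mul_right _ (by omega))

lemma bhattacharyya_pow_div_le_choose_mul {p : ℝ} (hp0 : 0 ≤ p) (hp1 : p ≤ 1) (k : ℕ) :
    bhattacharyya p ^ (2 * k) / (2 * k + 1) ≤ (2 * k).choose k * ((1 - p) ^ k * p ^ k) := by
  have h4 : (4 : ℝ) ^ k ≤ (2 * k + 1) * (2 * k).choose k := by
    exact_mod_cast Nat.centralBinom_eq_two_mul_choose k ▸ four_pow_le_succ_mul_centralBinom k
  have hpow : bhattacharyya p ^ (2 * k) = 4 ^ k * ((1 - p) ^ k * p ^ k) := by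
    rw [pow_mul, sq_bhattacharyya hp0 hp1, ← mul_pow, mul_pow, mul_comm p]
  rw [div_le_iff₀ (by positivity), hpow]
  have : 0 ≤ (1 - p) ^ k * p ^ k := mul_nonneg (pow_nonneg (by linarith) k) (pow_nonneg hp0 k)
  nlinarith

lemma tendsto_log_div_of_le_of_le_s14 {u a b : ℝ} {P : ℕ → ℝ} (hu : 0 < u) (ha : 0 < a)
    (hlo : ∀ n : ℕ, u ^ n * a / (n + 1) ≤ P n) (hhi : ∀ n, P n ≤ u ^ n * b) :
    Tendsto (fun n : ℕ => Real.log (P n) / n) atTop (nhds (Real.log u)) := by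
  have hlog : Tendsto (fun n : ℕ => Real.log (n + 1) / n) atTop (nhds 0) := by
    have h := (Real.tendsto_pow_log_div_mul_add_atTop 1 (-1) 1 one_ne_zero).comp
      (tendsto_atTop_add_const_right atTop 1 tendsto_natCast_atTop_atTop)
    simpa [Function.comp_def] using h
  have hL : Tendsto (fun n : ℕ => Real.log u + Real.log a / n - Real.log (n + 1) / n) atTop
      (nhds (Real.log u)) := by
    simpa using (tendsto_const_nhds.add (tendsto_const_div_atTop_nhds_zero_nat _)).sub hlog
  have hU : Tendsto (fun n : ℕ => Real.log u + Real.log b / n) atTop (nhds (Real.log u)) := by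
    simpa using tendsto_const_nhds.add (tendsto_const_div_atTop_nhds_zero_nat (Real.log b))
  have hpos : ∀ᶠ n : ℕ in atTop, (0 : ℝ) < n :=
    (eventually_ge_atTop 1).mono fun n hn => by exact_mod_cast hn
  refine tendsto_of_tendsto_of_tendsto_of_le_of_le' hL hU ?_ ?_ <;>
    filter_upwards [hpos] with n hn'
  · have h := Real.log_le_log (by positivity) (hlo n)
    rw [Real.log_div (by positivity) (by positivity), Real.log_mul (by positivity) ha.ne',
      Real.log_pow] at h
    rw [le_div_iff₀ hn']
    field_simp
    linarith
  · have hP : 0 < P n := lt_of_lt_of_le (by positivity) (hlo n)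
    have hb : 0 < b := pos_of_mul_pos_right (hP.trans_le (hhi n)) (by positivity)
    have h := Real.log_le_log hP (hhi n)
    rw [Real.log_mul (by positivity) hb.ne', Real.log_pow] at h
    rw [div_le_iff₀ hn']
    field_simp
    linarith

def tilt (ρ : ℝ) (x : ℤ) : ℝ≥0∞ := ENNReal.ofReal (ρ ^ x)

@[simp] lemma tilt_zero (ρ : ℝ) : tilt ρ 0 = 1 := by simp [tilt]

lemma tilt_add {ρ : ℝ} (hρ : 0 < ρ) (x y : ℤ) : tilt ρ (x + y) = tilt ρ x * tilt ρ y := by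
  rw [tilt, tilt, tilt, zpow_add₀ hρ.ne', ENNReal.ofReal_mul (zpow_nonneg hρ.le x)]

omit [MeasurableSpace Ω] in
lemma walk_succ (Y : ℕ → Ω → ℤ) (n : ℕ) (ω : Ω) : walk Y (n + 1) ω = walk Y n ω + Y n ω :=
  Finset.sum_range_succ _ _

def visitsZero (Y : ℕ → Ω → ℤ) (s : Set ℕ) : Set Ω := {ω | ∃ m ∈ s, walk Y m ω = 0}

omit [MeasurableSpace Ω] in
lemma visitsZero_Ioc_succ (Y : ℕ → Ω → ℤ) {n N : ℕ} (hnN : n ≤ N) :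
    visitsZero Y (Set.Ioc n (N + 1)) = visitsZero Y (Set.Ioc n N) ∪ {ω | walk Y (N + 1) ω = 0} := by
  ext ω
  simp only [visitsZero, Set.mem_Ioc, Set.mem_union, Set.mem_ofPred_eq]
  constructor
  · rintro ⟨m, ⟨hnm, hmN⟩, hm⟩
    rcases Nat.lt_or_ge m (N + 1) with h | h
    · exact Or.inl ⟨m, ⟨hnm, by omega⟩, hm⟩
    · exact Or.inr (by rwa [← le_antisymm hmN h])
  · rintro (⟨m, ⟨hnm, hmN⟩, hm⟩ | h)
    · exact ⟨m, ⟨hnm, by omega⟩, hm⟩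
    · exact ⟨N + 1, ⟨by omega, le_rfl⟩, h⟩

/-- `ρ ^ X_{min τ N}` for `τ` the first visit to `0` after time `n`, as `ρ ^ 0 = 1`. -/
def stoppedTilt (ρ : ℝ) (Y : ℕ → Ω → ℤ) (n N : ℕ) (ω : Ω) : ℝ≥0∞ :=
  (visitsZero Y (Set.Ioc n N)).indicator 1 ω
    + (visitsZero Y (Set.Ioc n N))ᶜ.indicator (fun ω => tilt ρ (walk Y N ω)) ω

omit [MeasurableSpace Ω] in
lemma stoppedTilt_succ {ρ : ℝ} (hρ : 0 < ρ) (Y : ℕ → Ω → ℤ) {n N : ℕ} (hnN : n ≤ N) (ω : Ω) :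
    stoppedTilt ρ Y n (N + 1) ω = (visitsZero Y (Set.Ioc n N)).indicator 1 ω
      + (visitsZero Y (Set.Ioc n N))ᶜ.indicator (fun ω => tilt ρ (walk Y N ω)) ω
        * tilt ρ (Y N ω) := by
  have hstep := tilt_add hρ (walk Y N ω) (Y N ω)
  rw [← walk_succ] at hstep
  by_cases hH : ω ∈ visitsZero Y (Set.Ioc n N)
  · have hH' : ω ∈ visitsZero Y (Set.Ioc n (N + 1)) := by
      rw [visitsZero_Ioc_succ Y hnN]; exact Or.inl hH
    simp [stoppedTilt, hH, hH']
  · by_cases hz : walk Y (N + 1) ω = 0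
    · have hH' : ω ∈ visitsZero Y (Set.Ioc n (N + 1)) := by
        rw [visitsZero_Ioc_succ Y hnN]; exact Or.inr hz
      simp [stoppedTilt, hH, hH', ← hstep, hz]
    · have hH' : ω ∉ visitsZero Y (Set.Ioc n (N + 1)) := by
        rw [visitsZero_Ioc_succ Y hnN]; simp [hH, hz]
      simp [stoppedTilt, hH, hH', hstep]

def signCylinder (Y : ℕ → Ω → ℤ) (M : ℕ) (S : Finset ℕ) : Set Ω :=
  ⋂ i ∈ range M, Y i ⁻¹' {if i ∈ S then 1 else -1}

omit [MeasurableSpace Ω] in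
lemma walk_eq_of_mem_signCylinder {Y : ℕ → Ω → ℤ} {M : ℕ} {S : Finset ℕ} (hS : S ⊆ range M)
    {ω : Ω} (hω : ω ∈ signCylinder Y M S) : walk Y M ω = 2 * #S - M := by
  simp only [signCylinder, Set.mem_iInter, Set.mem_preimage, Set.mem_singleton_iff] at hω
  rw [walk, sum_congr rfl hω, sum_ite, filter_mem_eq_inter, inter_eq_right.2 hS,
    filter_notMem_eq_sdiff, sum_const, sum_const, card_sdiff_of_subset hS, card_range,
    nsmul_eq_mul, nsmul_eq_mul, Nat.cast_sub ((card_le_card hS).trans_eq (card_range M))]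
  ring

omit [MeasurableSpace Ω] in
lemma pairwiseDisjoint_signCylinder (Y : ℕ → Ω → ℤ) {M : ℕ} {T : Finset (Finset ℕ)}
    (hT : ∀ S ∈ T, S ⊆ range M) : (T : Set (Finset ℕ)).PairwiseDisjoint (signCylinder Y M) := by
  intro S hS S' hS' hne
  refine Set.disjoint_left.2 fun ω hω hω' => hne ?_
  simp only [signCylinder, Set.mem_iInter, Set.mem_preimage, Set.mem_singleton_iff] at hω hω'
  ext i
  by_cases hi : i ∈ range M
  · have h := (hω i hi).symm.trans (hω' i hi)
    split_ifs at h <;> simp_all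
  · exact iff_of_false (fun h => hi (hT S hS h)) (fun h => hi (hT S' hS' h))

abbrev walkHistory (Y : ℕ → Ω → ℤ) (N : ℕ) : MeasurableSpace Ω :=
  ⨆ i < N, MeasurableSpace.comap (Y i) inferInstance

omit [MeasurableSpace Ω] in
lemma measurable_walk_of_le (Y : ℕ → Ω → ℤ) {m N : ℕ} (hmN : m ≤ N) :
    Measurable[walkHistory Y N] (walk Y m) :=
  Finset.measurable_sum _ fun i hi => (comap_measurable (Y i)).mono
    (le_iSup₂ (f := fun j (_ : j < N) => MeasurableSpace.comap (Y j) inferInstance) i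
      (lt_of_lt_of_le (Finset.mem_range.1 hi) hmN)) le_rfl

omit [MeasurableSpace Ω] in
lemma measurableSet_visitsZero_Ioc (Y : ℕ → Ω → ℤ) (n N : ℕ) :
    MeasurableSet[walkHistory Y N] (visitsZero Y (Set.Ioc n N)) := by
  have h : visitsZero Y (Set.Ioc n N) = ⋃ m ∈ Set.Ioc n N, walk Y m ⁻¹' {0} := by
    ext ω; simp [visitsZero]
  rw [h]
  exact MeasurableSet.biUnion (Set.to_countable _)
    fun m hm => measurable_walk_of_le Y hm.2 (measurableSet_singleton 0)

structure IsBernoulliWalk (μ : Measure Ω) (p : ℝ) (Y : ℕ → Ω → ℤ) : Prop where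
  measurable : ∀ i, Measurable (Y i)
  step_eq : ∀ i ω, Y i ω = 1 ∨ Y i ω = -1
  measure_step_eq_one : ∀ i, μ {ω | Y i ω = 1} = ENNReal.ofReal (1 - p)
  iIndepFun : iIndepFun Y μ

namespace IsBernoulliWalk

variable {μ : Measure Ω} {p : ℝ} {Y : ℕ → Ω → ℤ}

lemma measure_step_eq_neg_one [IsProbabilityMeasure μ] (hY : IsBernoulliWalk μ p Y)
    (hp : p ≤ 1) (i : ℕ) : μ {ω | Y i ω = -1} = ENNReal.ofReal p := by
  have hcompl : {ω | Y i ω = -1} = (Y i ⁻¹' {1})ᶜ := by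
    ext ω
    rcases hY.step_eq i ω with h | h <;> simp [h]
  rw [hcompl, prob_compl_eq_one_sub ((hY.measurable i) (measurableSet_singleton 1)),
    show Y i ⁻¹' {1} = {ω | Y i ω = 1} from rfl, hY.measure_step_eq_one, ← ENNReal.ofReal_one,
    ← ENNReal.ofReal_sub _ (by linarith)]
  ring_nf

lemma walkHistory_le (hY : IsBernoulliWalk μ p Y) (N : ℕ) : walkHistory Y N ≤ ‹MeasurableSpace Ω› :=
  iSup₂_le fun i _ => (hY.measurable i).comap_le

lemma indep_walkHistory_step (hY : IsBernoulliWalk μ p Y) (N : ℕ) :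
    Indep (walkHistory Y N) (MeasurableSpace.comap (Y N) inferInstance) μ := by
  have h := indep_iSup_of_disjoint (fun i => (hY.measurable i).comap_le)
    ((iIndepFun_iff_iIndep _ _ μ).1 hY.iIndepFun) (S := Set.Iio N) (T := {N}) (by simp)
  refine indep_of_indep_of_le_right h ?_
  exact le_iSup₂ (f := fun j (_ : j ∈ ({N} : Set ℕ)) => MeasurableSpace.comap (Y j) inferInstance)
    N rfl

lemma lintegral_mul_step (hY : IsBernoulliWalk μ p Y) {N : ℕ} {F : Ω → ℝ≥0∞}
    (hF : Measurable[walkHistory Y N] F) (g : ℤ → ℝ≥0∞) :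
    ∫⁻ ω, F ω * g (Y N ω) ∂μ = (∫⁻ ω, F ω ∂μ) * ∫⁻ ω, g (Y N ω) ∂μ :=
  lintegral_mul_eq_lintegral_mul_lintegral_of_independent_measurableSpace (hY.walkHistory_le N)
    (hY.measurable N).comap_le (hY.indep_walkHistory_step N) hF
    ((measurable_of_countable g).comp (comap_measurable (Y N)))

lemma lintegral_tilt_step [IsProbabilityMeasure μ] (hY : IsBernoulliWalk μ p Y)
    (hp0 : 0 ≤ p) (hp1 : p ≤ 1) {ρ : ℝ} (hρ : 0 ≤ ρ) (i : ℕ) :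
    ∫⁻ ω, tilt ρ (Y i ω) ∂μ = ENNReal.ofReal ((1 - p) * ρ + p * ρ⁻¹) := by
  have hsplit : (fun ω => tilt ρ (Y i ω)) = fun ω =>
      {ω | Y i ω = 1}.indicator (fun _ => ENNReal.ofReal ρ) ω
        + {ω | Y i ω = -1}.indicator (fun _ => ENNReal.ofReal ρ⁻¹) ω := by
    ext ω
    rcases hY.step_eq i ω with h | h <;> simp [h, tilt]
  have hmeas : ∀ x : ℤ, MeasurableSet {ω | Y i ω = x} :=
    fun x => (hY.measurable i) (measurableSet_singleton x)
  rw [hsplit, lintegral_add_left (measurable_const.indicator (hmeas 1)),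
    lintegral_indicator_const (hmeas 1), lintegral_indicator_const (hmeas (-1)),
    hY.measure_step_eq_one, hY.measure_step_eq_neg_one hp1,
    ENNReal.ofReal_add (by positivity) (by positivity), ENNReal.ofReal_mul (by linarith),
    ENNReal.ofReal_mul hp0, mul_comm, mul_comm (ENNReal.ofReal ρ⁻¹)]

lemma lintegral_tilt_walk [IsProbabilityMeasure μ] (hY : IsBernoulliWalk μ p Y)
    (hp0 : 0 ≤ p) (hp1 : p ≤ 1) {ρ : ℝ} (hρ : 0 < ρ) (n : ℕ) :
    ∫⁻ ω, tilt ρ (walk Y n ω) ∂μ = ENNReal.ofReal ((1 - p) * ρ + p * ρ⁻¹) ^ n := by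
  induction n with
  | zero => simp [walk]
  | succ n ih =>
    simp_rw [walk_succ, tilt_add hρ]
    rw [hY.lintegral_mul_step (F := fun ω => tilt ρ (walk Y n ω))
        ((measurable_of_countable (tilt ρ)).comp (measurable_walk_of_le Y le_rfl)),
      ih, hY.lintegral_tilt_step hp0 hp1 hρ.le, pow_succ]

lemma lintegral_stoppedTilt_succ_le [IsProbabilityMeasure μ] (hY : IsBernoulliWalk μ p Y)
    (hp0 : 0 ≤ p) (hp1 : p ≤ 1) {ρ : ℝ} (hρ : 0 < ρ) (hc : (1 - p) * ρ + p * ρ⁻¹ ≤ 1)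
    {n N : ℕ} (hnN : n ≤ N) :
    ∫⁻ ω, stoppedTilt ρ Y n (N + 1) ω ∂μ ≤ ∫⁻ ω, stoppedTilt ρ Y n N ω ∂μ := by
  set H := visitsZero Y (Set.Ioc n N)
  have hH : MeasurableSet[walkHistory Y N] H := measurableSet_visitsZero_Ioc Y n N
  have hF : Measurable[walkHistory Y N] (Hᶜ.indicator fun ω => tilt ρ (walk Y N ω)) :=
    ((measurable_of_countable (tilt ρ)).comp (measurable_walk_of_le Y le_rfl)).indicator hH.compl
  simp_rw [stoppedTilt_succ hρ Y hnN, stoppedTilt]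
  rw [lintegral_add_left (measurable_one.indicator (hY.walkHistory_le N _ hH)),
    lintegral_add_left (measurable_one.indicator (hY.walkHistory_le N _ hH)),
    hY.lintegral_mul_step hF, hY.lintegral_tilt_step hp0 hp1 hρ.le]
  gcongr
  exact mul_le_of_le_one_right' (ENNReal.ofReal_le_one.2 hc)

lemma measure_visitsZero_Ioc_le [IsProbabilityMeasure μ] (hY : IsBernoulliWalk μ p Y)
    (hp0 : 0 ≤ p) (hp1 : p ≤ 1) {ρ : ℝ} (hρ : 0 < ρ) (hc : (1 - p) * ρ + p * ρ⁻¹ ≤ 1)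
    (n N : ℕ) :
    μ (visitsZero Y (Set.Ioc n N)) ≤ ENNReal.ofReal ((1 - p) * ρ + p * ρ⁻¹) ^ n := by
  rcases lt_or_ge N n with hNn | hnN
  · simp [Set.Ioc_eq_empty_of_le hNn.le, visitsZero]
  calc μ (visitsZero Y (Set.Ioc n N))
      = ∫⁻ ω, (visitsZero Y (Set.Ioc n N)).indicator 1 ω ∂μ :=
        (lintegral_indicator_one (hY.walkHistory_le N _ (measurableSet_visitsZero_Ioc Y n N))).symm
    _ ≤ ∫⁻ ω, stoppedTilt ρ Y n N ω ∂μ := lintegral_mono fun ω => le_self_add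
    _ ≤ ∫⁻ ω, stoppedTilt ρ Y n n ω ∂μ := by
      induction N, hnN using Nat.le_induction with
      | base => exact le_rfl
      | succ N hnN ih =>
        exact (hY.lintegral_stoppedTilt_succ_le hp0 hp1 hρ hc hnN).trans ih
    _ = ENNReal.ofReal ((1 - p) * ρ + p * ρ⁻¹) ^ n := by
      simpa [stoppedTilt, visitsZero] using hY.lintegral_tilt_walk hp0 hp1 hρ n

lemma measure_visitsZero_Ioi_le [IsProbabilityMeasure μ] (hY : IsBernoulliWalk μ p Y)
    (hp0 : 0 < p) (hp1 : p < 1) (n : ℕ) :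
    μ (visitsZero Y (Set.Ioi n)) ≤ ENNReal.ofReal (bhattacharyya p ^ n) := by
  have hunion : visitsZero Y (Set.Ioi n) = ⋃ N, visitsZero Y (Set.Ioc n N) := by
    ext ω
    simp only [visitsZero, Set.mem_iUnion, Set.mem_Ioi, Set.mem_Ioc, Set.mem_ofPred_eq]
    exact ⟨fun ⟨m, hm, hz⟩ => ⟨m, m, ⟨hm, le_rfl⟩, hz⟩, fun ⟨_, m, hm, hz⟩ => ⟨m, hm.1, hz⟩⟩
  have hmono : Monotone fun N => visitsZero Y (Set.Ioc n N) :=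
    fun _ _ hN _ ⟨m, hm, hz⟩ => ⟨m, ⟨hm.1, hm.2.trans hN⟩, hz⟩
  have hρ : 0 < √(p / (1 - p)) := Real.sqrt_pos.2 (div_pos hp0 (by linarith))
  have hc := one_sub_mul_add_mul_inv_sqrt hp0 hp1
  rw [hunion, hmono.measure_iUnion, ENNReal.ofReal_pow (bhattacharyya_nonneg p), ← hc]
  exact iSup_le fun N => hY.measure_visitsZero_Ioc_le hp0.le hp1.le hρ
    (hc ▸ bhattacharyya_le_one hp0.le hp1.le) n N

lemma measure_signCylinder [IsProbabilityMeasure μ] (hY : IsBernoulliWalk μ p Y)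
    (hp0 : 0 ≤ p) (hp1 : p ≤ 1) {M : ℕ} {S : Finset ℕ} (hS : S ⊆ range M) :
    μ (signCylinder Y M S) = ENNReal.ofReal ((1 - p) ^ #S * p ^ (M - #S)) := by
  have hstep : ∀ i, μ (Y i ⁻¹' {if i ∈ S then 1 else -1})
      = ENNReal.ofReal (if i ∈ S then 1 - p else p) := by
    intro i
    split_ifs
    · exact hY.measure_step_eq_one i
    · exact hY.measure_step_eq_neg_one hp1 i
  rw [signCylinder, hY.iIndepFun.measure_inter_preimage_eq_mul _
      fun i _ => measurableSet_singleton _]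
  simp_rw [hstep]
  rw [← ENNReal.ofReal_prod_of_nonneg fun i _ => by split_ifs <;> linarith, prod_ite,
    filter_mem_eq_inter, inter_eq_right.2 hS, filter_notMem_eq_sdiff, prod_const, prod_const,
    card_sdiff_of_subset hS, card_range]

lemma choose_mul_pow_le_measure_walk_eq_zero [IsProbabilityMeasure μ]
    (hY : IsBernoulliWalk μ p Y) (hp0 : 0 ≤ p) (hp1 : p ≤ 1) (k : ℕ) :
    ENNReal.ofReal ((2 * k).choose k * ((1 - p) ^ k * p ^ k)) ≤ μ {ω | walk Y (2 * k) ω = 0} := by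
  have hT : ∀ S ∈ powersetCard k (range (2 * k)), S ⊆ range (2 * k) :=
    fun S hS => (mem_powersetCard.1 hS).1
  calc ENNReal.ofReal ((2 * k).choose k * ((1 - p) ^ k * p ^ k))
      = ∑ S ∈ powersetCard k (range (2 * k)), μ (signCylinder Y (2 * k) S) := by
        rw [sum_congr rfl fun S hS => by
          rw [hY.measure_signCylinder hp0 hp1 (hT S hS), (mem_powersetCard.1 hS).2],
          sum_const, card_powersetCard, card_range, nsmul_eq_mul,
          ENNReal.ofReal_mul (by positivity), ENNReal.ofReal_natCast, two_mul, Nat.add_sub_cancel]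
    _ = μ (⋃ S ∈ powersetCard k (range (2 * k)), signCylinder Y (2 * k) S) :=
        (measure_biUnion_finset (pairwiseDisjoint_signCylinder Y hT)
          fun S _ => Finset.measurableSet_biInter _
            fun i _ => hY.measurable i (measurableSet_singleton _)).symm
    _ ≤ μ {ω | walk Y (2 * k) ω = 0} := by
        refine measure_mono (Set.iUnion₂_subset fun S hS ω hω => ?_)
        rw [Set.mem_ofPred_eq, walk_eq_of_mem_signCylinder (hT S hS) hω,
          (mem_powersetCard.1 hS).2]
        push_cast
        ring

lemma ofReal_le_measure_visitsZero_Ioi [IsProbabilityMeasure μ] (hY : IsBernoulliWalk μ p Y)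
    (hp0 : 0 ≤ p) (hp1 : p ≤ 1) (n : ℕ) :
    ENNReal.ofReal (bhattacharyya p ^ n * (p * (1 - p) * (1 - 2 * p)) / (n + 1))
      ≤ μ (visitsZero Y (Set.Ioi n)) := by
  set k := n / 2 + 1
  have hnk : n < 2 * k := by omega
  have hkn : (2 * k : ℝ) ≤ n + 2 := by norm_cast; omega
  refine le_trans ?_ ((hY.choose_mul_pow_le_measure_walk_eq_zero hp0 hp1 k).trans
    (measure_mono fun ω hω => ⟨2 * k, hnk, hω⟩))
  refine ENNReal.ofReal_le_ofReal ?_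
  have hu := bhattacharyya_le_one hp0 hp1
  have hA : 0 ≤ bhattacharyya p ^ n * (p * (1 - p)) :=
    mul_nonneg (pow_nonneg (bhattacharyya_nonneg p) n) (mul_nonneg hp0 (by linarith))
  calc bhattacharyya p ^ n * (p * (1 - p) * (1 - 2 * p)) / (n + 1)
      ≤ bhattacharyya p ^ (n + 2) / (2 * k + 1) := by
        rw [pow_add, sq_bhattacharyya hp0 hp1, div_le_div_iff₀ (by positivity) (by positivity)]
        nlinarith [mul_le_mul_of_nonneg_left
          (show (1 - 2 * p) * (2 * k + 1) ≤ 4 * (n + 1) by nlinarith) hA]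
    _ ≤ bhattacharyya p ^ (2 * k) / (2 * k + 1) :=
        div_le_div_of_nonneg_right (pow_le_pow_of_le_one (bhattacharyya_nonneg p) hu
          (show 2 * k ≤ n + 2 by omega)) (by positivity)
    _ ≤ (2 * k).choose k * ((1 - p) ^ k * p ^ k) := by
        exact_mod_cast bhattacharyya_pow_div_le_choose_mul hp0 hp1 k

end IsBernoulliWalk

/-- For `p ∈ (0,1/2)`, non-asymptotic bounds on `P(B > n)` (where `B` is the
time of the last visit of the walk to `0`, so `B > n` iff `∃ m > n, X_m = 0`), and the resulting
limit `lim_{n→∞} (1/n) log P(B > n) = −D(1/2‖p)`. -/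
theorem stmt14
    (μ : Measure Ω) [IsProbabilityMeasure μ]
    (p : ℝ) (hp : p ∈ Set.Ioo (0:ℝ) (1/2))
    (Y : ℕ → Ω → ℤ)
    (hmeas : ∀ i, Measurable (Y i))
    (hrange : ∀ i ω, Y i ω = 1 ∨ Y i ω = -1)
    (hdist : ∀ i, μ {ω | Y i ω = 1} = ENNReal.ofReal (1 - p))
    (hindep : iIndepFun Y μ) :
    (∀ n : ℕ, 1 ≤ n →
      μ {ω | ∃ m, n < m ∧ walk Y m ω = 0}
          ≤ ENNReal.ofReal (Real.exp (-((n : ℝ) * Dhalf p)) / (1 - 2*p)) ∧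
      ENNReal.ofReal (Real.exp (-((n : ℝ) * Dhalf p)) * (p * (1 - p) * (1 - 2*p)) / ((n : ℝ) + 1))
          ≤ μ {ω | ∃ m, n < m ∧ walk Y m ω = 0}) ∧
    Tendsto
      (fun n : ℕ =>
        Real.log ((μ {ω | ∃ m, n < m ∧ walk Y m ω = 0}).toReal) / (n : ℝ))
      atTop (nhds (-(Dhalf p))) := by
  obtain ⟨hp0, hp2⟩ := hp
  have hp1 : p < 1 := by linarith
  have h12 : 0 < 1 - 2 * p := by linarith
  have hY : IsBernoulliWalk μ p Y := ⟨hmeas, hrange, hdist, hindep⟩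
  have hupper (n : ℕ) := hY.measure_visitsZero_Ioi_le hp0 hp1 n
  have hlower (n : ℕ) := hY.ofReal_le_measure_visitsZero_Ioi hp0.le hp1.le n
  refine ⟨fun n _ => ⟨?_, ?_⟩, ?_⟩
  · rw [exp_neg_mul_Dhalf hp0 hp1]
    exact (hupper n).trans <| ENNReal.ofReal_le_ofReal <|
      le_div_self (pow_nonneg (bhattacharyya_nonneg p) n) h12 (by linarith)
  · rw [exp_neg_mul_Dhalf hp0 hp1]
    exact hlower n
  · rw [Dhalf_eq_neg_log_bhattacharyya hp0 hp1, neg_neg]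
    refine tendsto_log_div_of_le_of_le_s14 (b := 1) (bhattacharyya_pos hp0 hp1)
      (mul_pos (mul_pos hp0 (sub_pos.2 hp1)) h12) (fun n => ?_) (fun n => ?_)
    · exact (ENNReal.ofReal_le_iff_le_toReal (measure_ne_top μ _)).1 (hlower n)
    · rw [mul_one]
      exact ENNReal.toReal_le_of_le_ofReal
        (pow_nonneg (bhattacharyya_nonneg p) n) (hupper n)
end
end

section
/- Let p ∈ (0,1/2), p̄ = 1−p, and let (λ₁,λ₂) ∈ ℝ² satisfy |λ₁| + λ₂ ≤ D(1/2‖p). Then E[exp(λ₁ T̃ + λ₂ |T̃|)] = ( 2 − √(1 − 4p p̄ e^{2(λ₁+λ₂)}) − √(1 − 4p p̄ e^{2(λ₂−λ₁)}) ) / (4p), where the defining series converges absolutely. -/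
/-!
With `x = p p̄ e^{2(±λ₁+λ₂)}`, the series is `(F(x₊) + F(x₋)) / (2p)` for the Catalan generating
function `F(x) = ∑ C_j x^{j+1}`, and the hypothesis on `λ` says exactly `x± ≤ 1/4`.
By the Catalan recurrence (a Cauchy product) `F = x + F²`, so `F = (1 ± √(1 - 4x)) / 2`.
For `x ≤ 1/4` the partial sums of `F` are at most those at `x = 1/4`, which telescope to
`(1 - binom(2n,n)/4ⁿ)/2 ≤ 1/2`; this gives convergence and selects the root with the minus sign.
-/

noncomputable section

open Finset

theorem catalan_mul_quarter_pow_succ (n : ℕ) :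
    (catalan n : ℝ) * (1/4) ^ (n + 1) =
      ((n.centralBinom : ℝ) / 4 ^ n - ((n + 1).centralBinom : ℝ) / 4 ^ (n + 1)) / 2 := by
  have hcat : ((n : ℝ) + 1) * catalan n = n.centralBinom := by
    exact_mod_cast succ_mul_catalan_eq_centralBinom n
  have hcb : ((n : ℝ) + 1) * (n + 1).centralBinom = 2 * (2 * n + 1) * n.centralBinom := by
    exact_mod_cast Nat.succ_mul_centralBinom_succ n
  have hn : (n : ℝ) + 1 ≠ 0 := by positivity
  rw [one_div_pow, pow_succ]
  field_simp
  apply mul_left_cancel₀ hn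
  linear_combination 2 * hcat + hcb

theorem sum_range_catalan_mul_quarter_pow (n : ℕ) :
    ∑ j ∈ range n, (catalan j : ℝ) * (1/4) ^ (j + 1) = (1 - (n.centralBinom : ℝ) / 4 ^ n) / 2 := by
  simp_rw [catalan_mul_quarter_pow_succ, ← sum_div,
    sum_range_sub' (fun j ↦ (j.centralBinom : ℝ) / 4 ^ j)]
  simp

theorem sum_range_catalan_mul_pow_le_half {x : ℝ} (hx₀ : 0 ≤ x) (hx : x ≤ 1/4) (n : ℕ) :
    ∑ j ∈ range n, (catalan j : ℝ) * x ^ (j + 1) ≤ 1/2 :=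
  calc ∑ j ∈ range n, (catalan j : ℝ) * x ^ (j + 1)
      ≤ ∑ j ∈ range n, (catalan j : ℝ) * (1/4) ^ (j + 1) := by gcongr
    _ = (1 - (n.centralBinom : ℝ) / 4 ^ n) / 2 := sum_range_catalan_mul_quarter_pow n
    _ ≤ 1/2 := by gcongr; simp only [sub_le_self_iff]; positivity

theorem summable_catalan_mul_pow {x : ℝ} (hx₀ : 0 ≤ x) (hx : x ≤ 1/4) :
    Summable fun j ↦ (catalan j : ℝ) * x ^ (j + 1) :=
  summable_of_sum_range_le (fun _ ↦ by positivity) (sum_range_catalan_mul_pow_le_half hx₀ hx)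

theorem tsum_catalan_mul_pow_le_half {x : ℝ} (hx₀ : 0 ≤ x) (hx : x ≤ 1/4) :
    ∑' j, (catalan j : ℝ) * x ^ (j + 1) ≤ 1/2 :=
  Real.tsum_le_of_sum_range_le (fun _ ↦ by positivity) (sum_range_catalan_mul_pow_le_half hx₀ hx)

theorem tsum_catalan_mul_pow_sq {x : ℝ} (hx₀ : 0 ≤ x) (hx : x ≤ 1/4) :
    (∑' j, (catalan j : ℝ) * x ^ (j + 1)) ^ 2 = ∑' j, (catalan j : ℝ) * x ^ (j + 1) - x := by
  set f : ℕ → ℝ := fun j ↦ (catalan j : ℝ) * x ^ (j + 1)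
  have hf : Summable f := summable_catalan_mul_pow hx₀ hx
  have hf' : Summable fun j ↦ ‖f j‖ :=
    hf.congr fun j ↦ (Real.norm_of_nonneg (by positivity)).symm
  have hconv (n : ℕ) : ∑ kl ∈ antidiagonal n, f kl.1 * f kl.2 = f (n + 1) := by
    simp only [f, catalan_succ', Nat.cast_sum, Nat.cast_mul, sum_mul]
    refine sum_congr rfl fun kl hkl ↦ ?_
    rw [HasAntidiagonal.mem_antidiagonal] at hkl
    rw [← hkl]; ring
  rw [sq, tsum_mul_tsum_eq_tsum_sum_antidiagonal_of_summable_norm hf' hf', tsum_congr hconv,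
    hf.tsum_eq_zero_add]
  simp [f]

theorem hasSum_catalan_mul_pow {x : ℝ} (hx₀ : 0 ≤ x) (hx : x ≤ 1/4) :
    HasSum (fun j ↦ (catalan j : ℝ) * x ^ (j + 1)) ((1 - √(1 - 4 * x)) / 2) := by
  set F := ∑' j, (catalan j : ℝ) * x ^ (j + 1)
  have hF : F ≤ 1/2 := tsum_catalan_mul_pow_le_half hx₀ hx
  have hsqrt : √(1 - 4 * x) = 1 - 2 * F := by
    rw [show 1 - 4 * x = (1 - 2 * F) ^ 2 by linear_combination -4 * tsum_catalan_mul_pow_sq hx₀ hx,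
      Real.sqrt_sq (by linarith)]
  rw [hsqrt, show (1 - (1 - 2 * F)) / 2 = F by ring]
  exact (summable_catalan_mul_pow hx₀ hx).hasSum

theorem exp_two_mul_Dhalf {p : ℝ} (hp₀ : 0 < p) (hp₁ : p < 1) :
    Real.exp (2 * Dhalf p) = 1 / (4 * p * (1 - p)) := by
  have : 0 < 1 - p := by linarith
  have h2D : 2 * Dhalf p = Real.log ((1/2) / p) + Real.log ((1/2) / (1 - p)) := by
    rw [Dhalf]; ring
  rw [h2D, Real.exp_add, Real.exp_log (by positivity), Real.exp_log (by positivity)]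
  field_simp
  ring

theorem mul_exp_two_mul_le_quarter {p a : ℝ} (hp₀ : 0 < p) (hp₁ : p < 1) (ha : a ≤ Dhalf p) :
    p * (1 - p) * Real.exp (2 * a) ≤ 1/4 := by
  have : 0 < 1 - p := by linarith
  calc p * (1 - p) * Real.exp (2 * a) ≤ p * (1 - p) * Real.exp (2 * Dhalf p) := by gcongr
    _ = 1/4 := by rw [exp_two_mul_Dhalf hp₀ hp₁]; field_simp

/-- For `p ∈ (0,1/2)`, `p̄ = 1−p`, and `|λ₁| + λ₂ ≤ D(1/2‖p)`, the defining
series of `E[exp(λ₁T̃+λ₂|T̃|)]`, namely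
`∑_{k≥1} (1/(2p))(p p̄)^k C_{k−1}(e^{2k(λ₁+λ₂)} + e^{2k(λ₂−λ₁)})` (reindexed by `k = j+1`),
converges absolutely (all terms are nonnegative), and its sum equals
`(2 − √(1 − 4p p̄ e^{2(λ₁+λ₂)}) − √(1 − 4p p̄ e^{2(λ₂−λ₁)}))/(4p)`. -/
theorem stmt15 (p l1 l2 : ℝ) (hp : p ∈ Set.Ioo (0:ℝ) (1/2))
    (h : |l1| + l2 ≤ Dhalf p) :
    Summable (fun j : ℕ =>
      (1/(2*p)) * (p*(1-p))^(j+1) * (catalan j : ℝ) *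
        (Real.exp (2*((j:ℝ)+1)*(l1+l2)) + Real.exp (2*((j:ℝ)+1)*(l2-l1)))) ∧
    ∑' j : ℕ, (1/(2*p)) * (p*(1-p))^(j+1) * (catalan j : ℝ) *
        (Real.exp (2*((j:ℝ)+1)*(l1+l2)) + Real.exp (2*((j:ℝ)+1)*(l2-l1)))
      = (2 - Real.sqrt (1 - 4*p*(1-p)*Real.exp (2*(l1+l2)))
          - Real.sqrt (1 - 4*p*(1-p)*Real.exp (2*(l2-l1)))) / (4*p) := by
  obtain ⟨hp₀, hp_half⟩ := hp
  have hp₁ : p < 1 := by linarith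
  have hpq : 0 < p * (1 - p) := mul_pos hp₀ (by linarith)
  have hx₁ : p * (1 - p) * Real.exp (2 * (l1 + l2)) ≤ 1/4 :=
    mul_exp_two_mul_le_quarter hp₀ hp₁ (by linarith [le_abs_self l1])
  have hx₂ : p * (1 - p) * Real.exp (2 * (l2 - l1)) ≤ 1/4 :=
    mul_exp_two_mul_le_quarter hp₀ hp₁ (by linarith [neg_abs_le l1])
  have hsum := ((hasSum_catalan_mul_pow (mul_pos hpq (Real.exp_pos _)).le hx₁).add
    (hasSum_catalan_mul_pow (mul_pos hpq (Real.exp_pos _)).le hx₂)).mul_left (1 / (2 * p))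
  have hpow (j : ℕ) (a : ℝ) : (p * (1 - p) * Real.exp (2 * a)) ^ (j + 1) =
      (p * (1 - p)) ^ (j + 1) * Real.exp (2 * ((j : ℝ) + 1) * a) := by
    rw [mul_pow, ← Real.exp_nat_mul]; congr 2; push_cast; ring
  simp only [hpow] at hsum
  refine ⟨(hsum.congr_fun fun j ↦ by ring).summable,
    (hsum.congr_fun fun j ↦ by ring).tsum_eq.trans ?_⟩
  field_simp
  ring
end
end
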